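/- arXiv:1010.1620 — 6 statements merged into one kernel-verified Lean document; each statement's English description precedes it below -/
import Mathlib

section
/- For every complex polynomial P in m variables and every integer j ≥ 1, Δ(r^{2j}·P) - r^{2j}·(ΔP) = 4j·E(r^{2(j-1)}·P) + 2j(m - 2j + 2)·r^{2(j-1)}·P. -/
open MvPolynomial Finset

noncomputable section

/-- The Laplacian `ΔP = ∑ ∂_i² P`. -/
def lap (m : ℕ) (P : MvPolynomial (Fin m) ℂ) : MvPolynomial (Fin m) ℂ :=
  ∑ i, pderiv i (pderiv i P)

/-- The Euler operator `E P = ∑ X_i ∂_i P`. -/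
def eulerOp (m : ℕ) (P : MvPolynomial (Fin m) ℂ) : MvPolynomial (Fin m) ℂ :=
  ∑ i, X i * pderiv i P

/-- The polynomial `r² = ∑ X_i²`. -/
def r2 (m : ℕ) : MvPolynomial (Fin m) ℂ := ∑ i, X i ^ 2

/-- The Fischer inner product `⟨P,Q⟩ = ∑_α (∏_i α_i!)·conj(coeff_α P)·coeff_α Q`. -/
def fischer (m : ℕ) (P Q : MvPolynomial (Fin m) ℂ) : ℂ :=
  ∑ α ∈ P.support, (∏ i, ((α i).factorial : ℂ)) * (starRingEnd ℂ) (coeff α P) * coeff α Q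

lemma pd_r2 (m : ℕ) (i : Fin m) : pderiv i (r2 m) = 2 * X i := by
  unfold r2
  rw [map_sum, Finset.sum_eq_single i]
  · rw [pow_two, pderiv_mul, pderiv_X_self]; ring
  · intro b _ hb
    rw [pow_two, pderiv_mul, pderiv_X_of_ne hb]; ring
  · simp

lemma euler_r2 (m k : ℕ) :
    ∑ i, X i * pderiv i (r2 m ^ k) = C ((2:ℂ) * k) * r2 m ^ k := by
  induction k with
  | zero => simp
  | succ k ih =>
    have : ∀ i : Fin m, X i * pderiv i (r2 m ^ (k+1))
        = (2 * X i ^ 2) * r2 m ^ k + r2 m * (X i * pderiv i (r2 m ^ k)) := by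
      intro i
      rw [pow_succ', pderiv_mul, pd_r2]
      ring
    rw [Finset.sum_congr rfl fun i _ => this i, Finset.sum_add_distrib,
      ← Finset.mul_sum, ih]
    have hr : ∑ i : Fin m, 2 * X i ^ 2 * r2 m ^ k = 2 * r2 m ^ (k+1) := by
      rw [← Finset.sum_mul, ← Finset.mul_sum]
      show 2 * r2 m * r2 m ^ k = _
      ring
    rw [hr]
    push_cast
    simp only [map_mul, map_add, map_one, map_ofNat]
    ring

lemma euler_mul (m k : ℕ) (P : MvPolynomial (Fin m) ℂ) :
    eulerOp m (r2 m ^ k * P)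
      = C ((2:ℂ) * k) * (r2 m ^ k * P) + r2 m ^ k * eulerOp m P := by
  unfold eulerOp
  have : ∀ i : Fin m, X i * pderiv i (r2 m ^ k * P)
      = (X i * pderiv i (r2 m ^ k)) * P + r2 m ^ k * (X i * pderiv i P) := by
    intro i; rw [pderiv_mul]; ring
  rw [Finset.sum_congr rfl fun i _ => this i, Finset.sum_add_distrib,
    ← Finset.sum_mul, euler_r2, ← Finset.mul_sum, mul_assoc]

theorem stmt2 (m : ℕ) (P : MvPolynomial (Fin m) ℂ) (j : ℕ) (hj : 1 ≤ j) :
    lap m (r2 m ^ j * P) - r2 m ^ j * lap m P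
      = (4 * (j : ℂ)) • eulerOp m (r2 m ^ (j - 1) * P)
        + (2 * (j : ℂ) * ((m : ℂ) - 2 * (j : ℂ) + 2)) • (r2 m ^ (j - 1) * P) := by
  obtain ⟨k, rfl⟩ : ∃ k, j = k + 1 := ⟨j - 1, (Nat.succ_pred_eq_of_pos hj).symm⟩
  set b : ℂ := 2 * ((k : ℂ) + 1) with hb
  have hp : ∀ i : Fin m, pderiv i (r2 m ^ (k+1)) = C b * (r2 m ^ k * X i) := by
    intro i
    rw [pderiv_pow, pd_r2, Nat.add_sub_cancel,
      ← map_natCast (C : ℂ →+* MvPolynomial (Fin m) ℂ) (k+1)]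
    push_cast
    rw [hb]
    simp only [map_mul, map_add, map_one, map_ofNat]
    ring
  have h1 : ∀ i : Fin m, pderiv i (pderiv i (r2 m ^ (k+1) * P))
      = C b * (r2 m ^ k * P)
        + C b * ((X i * pderiv i (r2 m ^ k)) * P)
        + (C b * 2 * r2 m ^ k) * (X i * pderiv i P)
        + r2 m ^ (k+1) * pderiv i (pderiv i P) := by
    intro i
    simp only [pderiv_mul, map_add, pderiv_X_self, pderiv_C, hp i, zero_mul, add_zero,
      zero_add, mul_one]
    ring
  have hlap : lap m (r2 m ^ (k+1) * P)
      = m • (C b * (r2 m ^ k * P))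
        + C b * ((C ((2:ℂ) * k) * r2 m ^ k) * P)
        + (C b * 2 * r2 m ^ k) * eulerOp m P
        + r2 m ^ (k+1) * lap m P := by
    unfold lap eulerOp
    rw [Finset.sum_congr rfl fun i _ => h1 i]
    rw [Finset.sum_add_distrib, Finset.sum_add_distrib, Finset.sum_add_distrib,
      Finset.sum_const, Finset.card_univ, Fintype.card_fin,
      ← Finset.mul_sum, ← Finset.sum_mul, euler_r2, ← Finset.mul_sum, ← Finset.mul_sum]
  rw [hlap, Nat.add_sub_cancel, euler_mul]
  rw [nsmul_eq_mul, ← map_natCast (C : ℂ →+* MvPolynomial (Fin m) ℂ) m,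
    smul_eq_C_mul, smul_eq_C_mul]
  push_cast
  rw [hb]
  simp only [map_mul, map_add, map_one, map_ofNat, map_sub]
  ring

end
end

section
/- (Harmonic projection formula.) Let m ≥ 2 and let P be a complex polynomial in m variables, homogeneous of degree n. Define H := ∑_{j=0}^{⌊n/2⌋} c_j · r^{2j} · Δ^j P, where c_0 = 1 and c_j = (-1)^j / (2^j · j! · ∏_{t=0}^{j-1}(2n + m - 4 - 2t)) for j ≥ 1. Then H is harmonic (ΔH = 0) and there exists a polynomial Q with P - H = r²·Q. -/
open MvPolynomial Finset

noncomputable section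

/-!
For `S` homogeneous of degree `d`, Euler's identity gives
`Δ(r^(2k) S) = r^(2k) ΔS + 2k(2d + m + 2k - 2) r^(2k-2) S`.
For `S = Δ^k P`, of degree `n - 2k`, the coefficient is `2k(2n + m - 2 - 2k)`, and the `c_k` are
chosen so that `c_k · 2k(2n + m - 2 - 2k) = -c_(k-1)`. Hence `ΔH` telescopes to
`c_q r^(2q) Δ^(q+1) P` with `q = ⌊n/2⌋`, which vanishes because `Δ^q P` has degree at most one.
All terms of `H` except `P` are multiples of `r²`.
-/

section Laplacian

variable {m : ℕ}

lemma lap_smul (a : ℂ) (P : MvPolynomial (Fin m) ℂ) : lap m (a • P) = a • lap m P := by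
  simp only [lap, Derivation.map_smul, smul_sum]

lemma lap_sum {ι : Type*} (s : Finset ι) (f : ι → MvPolynomial (Fin m) ℂ) :
    lap m (∑ j ∈ s, f j) = ∑ j ∈ s, lap m (f j) := by
  simp only [lap, map_sum]
  exact sum_comm

lemma isHomogeneous_lap {n : ℕ} {P : MvPolynomial (Fin m) ℂ} (h : P.IsHomogeneous n) :
    (lap m P).IsHomogeneous (n - 2) :=
  IsHomogeneous.sum _ _ _ fun _ _ => h.pderiv.pderiv

lemma isHomogeneous_iterate_lap {n : ℕ} {P : MvPolynomial (Fin m) ℂ} (h : P.IsHomogeneous n)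
    (j : ℕ) : ((lap m)^[j] P).IsHomogeneous (n - 2 * j) := by
  induction j with
  | zero => exact h
  | succ j ih =>
    rw [Function.iterate_succ_apply', Nat.mul_succ, ← Nat.sub_sub]
    exact isHomogeneous_lap ih

lemma lap_eq_zero_of_isHomogeneous {n : ℕ} {P : MvPolynomial (Fin m) ℂ} (h : P.IsHomogeneous n)
    (hn : n ≤ 1) : lap m P = 0 := by
  refine sum_eq_zero fun i _ => ?_
  have hconst : (pderiv i P).IsHomogeneous 0 := by
    simpa [Nat.sub_eq_zero_of_le hn] using h.pderiv (i := i)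
  rw [← totalDegree_zero_iff_isHomogeneous, totalDegree_eq_zero_iff_eq_C] at hconst
  rw [hconst, pderiv_C]

lemma eulerOp_eq_of_isHomogeneous {n : ℕ} {P : MvPolynomial (Fin m) ℂ} (h : P.IsHomogeneous n) :
    eulerOp m P = (n : ℂ) • P := by
  rw [eulerOp, h.sum_X_mul_pderiv, Nat.cast_smul_eq_nsmul]

lemma pderiv_r2 (i : Fin m) : pderiv i (r2 m) = 2 * X i := by
  rw [r2, map_sum, sum_eq_single i]
  · simp [mul_comm]
  · intro k _ hk
    simp [pderiv_X_of_ne hk]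
  · simp

lemma lap_r2_mul (S : MvPolynomial (Fin m) ℂ) :
    lap m (r2 m * S) = r2 m * lap m S + (4 : ℂ) • eulerOp m S + (2 * m : ℂ) • S := by
  have hi : ∀ i : Fin m, pderiv i (pderiv i (r2 m * S)) =
      r2 m * pderiv i (pderiv i S) + 4 * (X i * pderiv i S) + 2 * S := by
    intro i
    have h2 : pderiv i (2 : MvPolynomial (Fin m) ℂ) = 0 := by
      exact_mod_cast (pderiv i).map_natCast 2
    simp only [map_add, pderiv_mul, pderiv_r2, pderiv_X_self, h2]
    ring
  simp only [lap, eulerOp, sum_congr rfl fun i _ => hi i, sum_add_distrib, ← mul_sum, sum_const,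
    card_univ, Fintype.card_fin]
  simp only [smul_eq_C_mul, nsmul_eq_mul, map_mul, map_ofNat, map_natCast]
  ring

lemma lap_r2_mul_of_isHomogeneous {d : ℕ} {S : MvPolynomial (Fin m) ℂ} (hS : S.IsHomogeneous d) :
    lap m (r2 m * S) = r2 m * lap m S + (2 * (2 * d + m) : ℂ) • S := by
  rw [lap_r2_mul, eulerOp_eq_of_isHomogeneous hS]
  module

lemma isHomogeneous_r2 : (r2 m).IsHomogeneous 2 :=
  IsHomogeneous.sum _ _ _ fun i _ => (isHomogeneous_X ℂ i).pow 2

lemma lap_r2_pow_mul {d : ℕ} {S : MvPolynomial (Fin m) ℂ} (hS : S.IsHomogeneous d) (j : ℕ) :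
    lap m (r2 m ^ (j + 1) * S) = r2 m ^ (j + 1) * lap m S +
      (2 * (j + 1) * (2 * d + m + 2 * j) : ℂ) • (r2 m ^ j * S) := by
  induction j with
  | zero => simpa using lap_r2_mul_of_isHomogeneous hS
  | succ j ih =>
    have hdeg : (r2 m ^ (j + 1) * S).IsHomogeneous (2 * (j + 1) + d) :=
      (isHomogeneous_r2.pow (j + 1)).mul hS
    rw [pow_succ', mul_assoc, lap_r2_mul_of_isHomogeneous hdeg, ih]
    simp only [smul_eq_C_mul, map_mul, map_add, map_ofNat, map_natCast, map_one]
    push_cast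
    ring

end Laplacian

def harmonicCoeff (m n j : ℕ) : ℂ :=
  (-1) ^ j / (2 ^ j * (j.factorial : ℂ) * ∏ t ∈ range j, (2 * (n : ℂ) + m - 4 - 2 * t))

lemma harmonicCoeff_zero (m n : ℕ) : harmonicCoeff m n 0 = 1 := by
  simp [harmonicCoeff]

lemma harmonicCoeff_succ_mul {m n j : ℕ} (hm : 0 < m) (hj : 2 * (j + 1) ≤ n) :
    harmonicCoeff m n (j + 1) * (2 * (j + 1) * (2 * ((n - 2 * (j + 1) : ℕ) : ℂ) + m + 2 * j)) =
      -harmonicCoeff m n j := by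
  have hw : (2 * ((n - 2 * (j + 1) : ℕ) : ℂ) + m + 2 * j) = 2 * (n : ℂ) + m - 4 - 2 * j := by
    push_cast [Nat.cast_sub hj]
    ring
  have hw0 : (2 * (n : ℂ) + m - 4 - 2 * j) ≠ 0 := by
    rw [← hw]
    exact_mod_cast (by omega : 2 * (n - 2 * (j + 1)) + m + 2 * j ≠ 0)
  rw [hw, harmonicCoeff, harmonicCoeff, prod_range_succ, Nat.factorial_succ]
  generalize 2 * (n : ℂ) + m - 4 - 2 * j = w at hw0 ⊢
  push_cast
  field_simp
  ring

lemma lap_sum_harmonicCoeff_smul {m n : ℕ} (hm : 0 < m) {P : MvPolynomial (Fin m) ℂ}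
    (hP : P.IsHomogeneous n) :
    lap m (∑ j ∈ range (n / 2 + 1), harmonicCoeff m n j • (r2 m ^ j * (lap m)^[j] P)) = 0 := by
  set c := harmonicCoeff m n
  set A : ℕ → MvPolynomial (Fin m) ℂ := fun j => c j • (r2 m ^ j * (lap m)^[j + 1] P)
  have hstep : ∀ j ∈ range (n / 2),
      c (j + 1) • lap m (r2 m ^ (j + 1) * (lap m)^[j + 1] P) = A (j + 1) - A j := by
    intro j hj
    have hj : 2 * (j + 1) ≤ n := by rw [mem_range] at hj; omega
    rw [lap_r2_pow_mul (isHomogeneous_iterate_lap hP (j + 1)), smul_add, smul_smul,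
      harmonicCoeff_succ_mul hm hj, neg_smul, ← Function.iterate_succ_apply' (lap m),
      ← sub_eq_add_neg]
  have hlast : A (n / 2) = 0 := by
    have hdeg := isHomogeneous_iterate_lap hP (n / 2)
    simp only [A, Function.iterate_succ_apply', lap_eq_zero_of_isHomogeneous hdeg (by omega),
      mul_zero, smul_zero]
  calc lap m (∑ j ∈ range (n / 2 + 1), c j • (r2 m ^ j * (lap m)^[j] P))
      = ∑ j ∈ range (n / 2 + 1), c j • lap m (r2 m ^ j * (lap m)^[j] P) := by
        simp only [lap_sum, lap_smul]
    _ = A 0 + ∑ j ∈ range (n / 2), (A (j + 1) - A j) := by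
        rw [sum_range_succ', sum_congr rfl hstep, add_comm]
        simp [A, Function.iterate_succ_apply']
    _ = 0 := by rw [sum_range_sub, hlast]; abel

lemma exists_sub_sum_harmonicCoeff_smul_eq_r2_mul {m n : ℕ} (P : MvPolynomial (Fin m) ℂ) :
    ∃ Q, P - ∑ j ∈ range (n / 2 + 1), harmonicCoeff m n j • (r2 m ^ j * (lap m)^[j] P) =
      r2 m * Q := by
  refine ⟨-∑ j ∈ range (n / 2), harmonicCoeff m n (j + 1) • (r2 m ^ j * (lap m)^[j + 1] P), ?_⟩
  rw [sum_range_succ', harmonicCoeff_zero, pow_zero, one_mul, Function.iterate_zero_apply,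
    one_smul, mul_neg, mul_sum]
  simp only [mul_smul_comm, ← mul_assoc, ← pow_succ']
  abel

theorem stmt3 (m n : ℕ) (hm : 2 ≤ m) (P : MvPolynomial (Fin m) ℂ)
    (hP : P.IsHomogeneous n)
    (c : ℕ → ℂ)
    (hc0 : c 0 = 1)
    (hc : ∀ j, 1 ≤ j → c j = (-1) ^ j /
      (2 ^ j * (Nat.factorial j : ℂ) * ∏ t ∈ range j, (2 * (n : ℂ) + (m : ℂ) - 4 - 2 * (t : ℂ))))
    (H : MvPolynomial (Fin m) ℂ)
    (hH : H = ∑ j ∈ range (n / 2 + 1), c j • (r2 m ^ j * (lap m)^[j] P)) :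
    lap m H = 0 ∧ ∃ Q, P - H = r2 m * Q := by
  obtain rfl : c = harmonicCoeff m n := by
    funext j
    rcases j with _ | j
    · rw [hc0, harmonicCoeff_zero]
    · exact hc (j + 1) j.succ_pos
  subst hH
  exact ⟨lap_sum_harmonicCoeff_smul (by omega) hP, exists_sub_sum_harmonicCoeff_smul_eq_r2_mul P⟩

end
end

section
/- (Monogenic projection formula.) Let m, n satisfy 2n + m > 2. Let P be a Clifford-algebra-valued polynomial in m variables, homogeneous of degree n, and let H be harmonic (componentwise ΔH = 0), homogeneous of degree n, with P - H = r²·R for some Clifford-algebra-valued polynomial R. Then M := H + (2n + m - 2)⁻¹ · x(∂H) is monogenic (∂M = 0), and there exists a Clifford-algebra-valued polynomial N with P - M = x·N. -/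
open scoped TensorProduct
open MvPolynomial

set_option maxHeartbeats 1000000

noncomputable section

/-- The quadratic form `Q(x) = -(x₁² + ⋯ + x_m²)` on `ℂ^m`. -/
def Qf (m : ℕ) : QuadraticForm ℂ (Fin m → ℂ) :=
  QuadraticMap.weightedSumSquares ℂ (fun _ : Fin m => (-1 : ℂ))

/-- The complex Clifford algebra `ℂ_m`. -/
abbrev Cl (m : ℕ) := CliffordAlgebra (Qf m)

/-- The generators `e_i`, satisfying `e_i e_j + e_j e_i = -2δ_ij`. -/
def gen (m : ℕ) (i : Fin m) : Cl m := CliffordAlgebra.ι (Qf m) (Pi.single i 1)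

/-- Clifford-algebra-valued polynomials `𝒫 = MvPolynomial (Fin m) ℂ ⊗[ℂ] ℂ_m`. -/
abbrev CPoly (m : ℕ) := MvPolynomial (Fin m) ℂ ⊗[ℂ] Cl m

/-- Partial derivative `∂_{X_i}` acting on the polynomial factor. -/
def pd (m : ℕ) (i : Fin m) : CPoly m →ₗ[ℂ] CPoly m :=
  LinearMap.rTensor (Cl m) (MvPolynomial.pderiv i).toLinearMap

/-- The vector variable `x = ∑ X_i ⊗ e_i` as an element of `𝒫`. -/
def xE (m : ℕ) : CPoly m := ∑ i, (X i : MvPolynomial (Fin m) ℂ) ⊗ₜ[ℂ] gen m i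

/-- The Dirac operator `∂F = ∑ e_i ∂_{X_i} F`. -/
def dirac (m : ℕ) (F : CPoly m) : CPoly m :=
  ∑ i, ((1 : MvPolynomial (Fin m) ℂ) ⊗ₜ[ℂ] gen m i) * pd m i F

/-- The Laplacian on polynomials, as a linear map. -/
def lapLM (m : ℕ) : MvPolynomial (Fin m) ℂ →ₗ[ℂ] MvPolynomial (Fin m) ℂ :=
  ∑ i, (pderiv i).toLinearMap ∘ₗ (pderiv i).toLinearMap

/-- The componentwise Laplacian on `𝒫`. -/
def lapT (m : ℕ) : CPoly m →ₗ[ℂ] CPoly m :=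
  LinearMap.rTensor (Cl m) (lapLM m)

/-- The subspace of `𝒫` of elements homogeneous of degree `n`, i.e. lying in
(homogeneous degree-`n` polynomials) ⊗ ℂ_m. -/
def HomT (m n : ℕ) : Submodule ℂ (CPoly m) :=
  LinearMap.range
    (LinearMap.rTensor (Cl m) (homogeneousSubmodule (Fin m) ℂ n).subtype)

lemma Qf_single (m : ℕ) (i : Fin m) : Qf m (Pi.single i 1) = -1 := by
  simp [Qf, QuadraticMap.weightedSumSquares_apply, Pi.single_apply]

lemma gen_sq (m : ℕ) (i : Fin m) : gen m i * gen m i = -1 := by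
  rw [gen, CliffordAlgebra.ι_sq_scalar, Qf_single]
  simp

lemma gen_anti (m : ℕ) {i j : Fin m} (hij : i ≠ j) :
    gen m i * gen m j + gen m j * gen m i = 0 := by
  rw [gen, gen, CliffordAlgebra.ι_mul_ι_add_swap]
  have : QuadraticMap.polar (Qf m) (Pi.single i 1) (Pi.single j 1) = 0 := by
    rw [QuadraticMap.polar]
    simp only [Qf, QuadraticMap.weightedSumSquares_apply]
    rw [← Finset.sum_sub_distrib, ← Finset.sum_sub_distrib]
    rw [Finset.sum_eq_zero]
    intro k _
    have hji : j ≠ i := fun h => hij h.symm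
    by_cases h1 : k = i <;> by_cases h2 : k = j <;>
      simp [h1, h2, Pi.single_apply, hij, hji] <;> first | ring | (subst h1 h2; exact absurd rfl hij)
  rw [this]; simp

lemma gen_rel (m : ℕ) (i j : Fin m) :
    gen m i * gen m j + gen m j * gen m i = if i = j then (-2 : ℂ) • 1 else 0 := by
  by_cases h : i = j
  · subst h; rw [gen_sq]; simp; norm_num [two_smul]
  · simp [h, gen_anti m h]

lemma pderiv_comm' {σ : Type*} [DecidableEq σ] (i j : σ) (p : MvPolynomial σ ℂ) :
    pderiv i (pderiv j p) = pderiv j (pderiv i p) := by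
  induction p using MvPolynomial.induction_on with
  | C a => simp
  | add p q hp hq => simp [hp, hq]
  | mul_X p k hp =>
      simp only [pderiv_mul, hp, pderiv_X, Pi.single_apply]
      split_ifs <;> simp_all [Pi.single_apply] <;> ring

lemma euler_monomial (m : ℕ) (s : Fin m →₀ ℕ) (a : ℂ) :
    ∑ i, X i * pderiv i (monomial s a) = ((∑ i, s i : ℕ) : ℂ) • monomial s a := by
  have hterm : ∀ i : Fin m, X i * pderiv i (monomial s a) = monomial s (((s i : ℕ) : ℂ) * a) := by
    intro i
    rw [pderiv_monomial]
    rcases Nat.eq_zero_or_pos (s i) with h | h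
    · simp [h]
    · rw [X, monomial_mul, one_mul, mul_comm a]
      congr 1
      rw [add_comm, tsub_add_cancel_of_le (Finsupp.single_le_iff.mpr h)]
  rw [Finset.sum_congr rfl (fun i _ => hterm i), ← map_sum, ← Finset.sum_mul, ← Nat.cast_sum,
    ← smul_eq_mul, map_smul]

lemma euler_poly {m n : ℕ} {p : MvPolynomial (Fin m) ℂ} (hp : p.IsHomogeneous n) :
    ∑ i, X i * pderiv i p = (n : ℂ) • p := by
  conv_lhs => rw [p.as_sum]
  conv_rhs => rw [p.as_sum]
  rw [Finset.smul_sum]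
  simp only [map_sum, Finset.mul_sum]
  rw [Finset.sum_comm]
  refine Finset.sum_congr rfl fun s hs => ?_
  rw [euler_monomial]
  have h1 : (∑ i, s i) = n := by
    have h2 := hp (MvPolynomial.mem_support_iff.mp hs)
    rw [← h2, Finsupp.weight_apply, Finsupp.sum]
    simp only [Pi.one_apply, smul_eq_mul, mul_one]
    exact (Finset.sum_subset (Finset.subset_univ _)
      (fun x _ hx => Finsupp.notMem_support_iff.mp hx)).symm
  rw [h1]

-- basic tensor elements
def eT (m : ℕ) (i : Fin m) : CPoly m := (1 : MvPolynomial (Fin m) ℂ) ⊗ₜ[ℂ] gen m i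
def xT (m : ℕ) (i : Fin m) : CPoly m := (X i : MvPolynomial (Fin m) ℂ) ⊗ₜ[ℂ] (1 : Cl m)

lemma pd_tmul (m : ℕ) (i : Fin m) (p : MvPolynomial (Fin m) ℂ) (c : Cl m) :
    pd m i (p ⊗ₜ[ℂ] c) = (pderiv i p) ⊗ₜ[ℂ] c := rfl

lemma pd_tmul_mul (m : ℕ) (i : Fin m) (q : MvPolynomial (Fin m) ℂ) (c : Cl m) (F : CPoly m) :
    pd m i ((q ⊗ₜ[ℂ] c) * F) = ((pderiv i q) ⊗ₜ[ℂ] c) * F + (q ⊗ₜ[ℂ] c) * pd m i F := by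
  induction F using TensorProduct.induction_on with
  | zero => simp
  | tmul p d =>
      simp only [Algebra.TensorProduct.tmul_mul_tmul, pd_tmul, pderiv_mul, TensorProduct.add_tmul]
  | add F G hF hG => simp only [mul_add, map_add, hF, hG]; abel

lemma pd_comm (m : ℕ) (i j : Fin m) (F : CPoly m) : pd m i (pd m j F) = pd m j (pd m i F) := by
  induction F using TensorProduct.induction_on with
  | zero => simp
  | tmul p d => simp [pd_tmul, pderiv_comm']
  | add F G hF hG => simp [hF, hG]

lemma pd_e_mul (m : ℕ) (i j : Fin m) (F : CPoly m) :
    pd m i (eT m j * F) = eT m j * pd m i F := by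
  rw [eT, pd_tmul_mul]; simp

lemma pd_x_mul (m : ℕ) (i j : Fin m) (F : CPoly m) :
    pd m i (xT m j * F) = (if i = j then F else 0) + xT m j * pd m i F := by
  rw [xT, pd_tmul_mul]
  congr 1
  rcases eq_or_ne i j with h | h
  · subst h
    rw [pderiv_X_self, if_pos rfl, ← Algebra.TensorProduct.one_def, one_mul]
  · rw [pderiv_X_of_ne (Ne.symm h), if_neg h]
    simp

lemma eT_mul_eT (m : ℕ) (i j : Fin m) :
    eT m i * eT m j + eT m j * eT m i = if i = j then (-2 : ℂ) • 1 else 0 := by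
  simp only [eT, Algebra.TensorProduct.tmul_mul_tmul, one_mul]
  rw [← TensorProduct.tmul_add, gen_rel]
  split_ifs
  · rw [TensorProduct.tmul_smul, ← Algebra.TensorProduct.one_def]
  · simp

lemma xT_comm_eT (m : ℕ) (i j : Fin m) : xT m j * eT m i = eT m i * xT m j := by
  simp [xT, eT, Algebra.TensorProduct.tmul_mul_tmul]

lemma xE_eq (m : ℕ) : xE m = ∑ i, xT m i * eT m i := by
  simp [xE, xT, eT, Algebra.TensorProduct.tmul_mul_tmul]

lemma half_cancel {M : Type*} [AddCommGroup M] [Module ℂ M] {a b : M}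
    (h : a + a = (2 : ℂ) • b) : a = b := by
  have h2 : (2 : ℂ) • a = (2 : ℂ) • b := by rw [two_smul]; exact h
  have h3 := congrArg (fun z : M => (2 : ℂ)⁻¹ • z) h2
  simpa [smul_smul, (by norm_num : ((2:ℂ)⁻¹ * 2) = 1)] using h3

lemma eT_sq (m : ℕ) (i : Fin m) : eT m i * eT m i = -1 := by
  simp only [eT, Algebra.TensorProduct.tmul_mul_tmul, one_mul, gen_sq]
  rw [TensorProduct.tmul_neg, ← Algebra.TensorProduct.one_def]

lemma dirac_eq (m : ℕ) (F : CPoly m) : dirac m F = ∑ i, eT m i * pd m i F := rfl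

lemma dirac_add (m : ℕ) (F G : CPoly m) : dirac m (F + G) = dirac m F + dirac m G := by
  simp [dirac_eq, mul_add, Finset.sum_add_distrib]

lemma dirac_smul (m : ℕ) (a : ℂ) (F : CPoly m) : dirac m (a • F) = a • dirac m F := by
  simp [dirac_eq, Finset.smul_sum, mul_smul_comm]

lemma lapT_eq (m : ℕ) (F : CPoly m) : lapT m F = ∑ i, pd m i (pd m i F) := by
  induction F using TensorProduct.induction_on with
  | zero => simp
  | tmul p d =>
      simp [lapT, lapLM, pd_tmul, LinearMap.rTensor_tmul, LinearMap.sum_apply,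
        TensorProduct.sum_tmul]
  | add F G hF hG => simp [hF, hG, Finset.sum_add_distrib]

lemma dirac_dirac (m : ℕ) (F : CPoly m) : dirac m (dirac m F) = - lapT m F := by
  have expand : dirac m (dirac m F) = ∑ i, ∑ j, eT m i * (eT m j * pd m i (pd m j F)) := by
    rw [dirac_eq m F, dirac_eq]
    refine Finset.sum_congr rfl fun i _ => ?_
    rw [map_sum, Finset.mul_sum]
    exact Finset.sum_congr rfl fun j _ => by rw [pd_e_mul]
  have comm2 : ∑ i, ∑ j, eT m i * (eT m j * pd m i (pd m j F))
      = ∑ i, ∑ j, eT m j * (eT m i * pd m i (pd m j F)) := by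
    rw [Finset.sum_comm]
    exact Finset.sum_congr rfl fun j _ => Finset.sum_congr rfl fun i _ => by rw [pd_comm]
  have key : dirac m (dirac m F) + dirac m (dirac m F) = (-2 : ℂ) • lapT m F := by
    rw [expand]
    nth_rewrite 2 [comm2]
    rw [← Finset.sum_add_distrib]
    rw [lapT_eq, Finset.smul_sum]
    refine Finset.sum_congr rfl fun i _ => ?_
    rw [← Finset.sum_add_distrib]
    have : ∀ j, eT m i * (eT m j * pd m i (pd m j F)) + eT m j * (eT m i * pd m i (pd m j F))
        = if i = j then (-2 : ℂ) • pd m i (pd m j F) else 0 := by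
      intro j
      rw [← mul_assoc, ← mul_assoc, ← add_mul, eT_mul_eT]
      split_ifs <;> simp [smul_mul_assoc]
    rw [Finset.sum_congr rfl fun j _ => this j, Finset.sum_ite_eq Finset.univ i]
    simp only [Finset.mem_univ, if_true]
  have h2 : (2 : ℂ) • dirac m (dirac m F) = (2 : ℂ) • (- lapT m F) := by
    rw [two_smul, key]
    module
  have h3 := congrArg (fun z : CPoly m => (2 : ℂ)⁻¹ • z) h2
  simpa [smul_smul, (by norm_num : ((2:ℂ)⁻¹ * 2) = 1)] using h3

lemma dirac_x_mul (m : ℕ) (F : CPoly m) :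
    dirac m (xE m * F)
      = -((m : ℂ) • F) - (2 : ℂ) • (∑ i, xT m i * pd m i F) - xE m * dirac m F := by
  have step1 : ∀ i, pd m i (xE m * F) = eT m i * F + ∑ j, xT m j * (eT m j * pd m i F) := by
    intro i
    rw [xE_eq, Finset.sum_mul, map_sum]
    have h1 : ∀ j, pd m i (xT m j * eT m j * F)
        = (if i = j then eT m j * F else 0) + xT m j * (eT m j * pd m i F) := by
      intro j
      rw [mul_assoc, pd_x_mul, pd_e_mul]
    rw [Finset.sum_congr rfl fun j _ => h1 j, Finset.sum_add_distrib,
      Finset.sum_ite_eq Finset.univ i]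
    simp only [Finset.mem_univ, if_true]
  have expand : dirac m (xE m * F)
      = ∑ i, (eT m i * eT m i) * F + ∑ i, ∑ j, xT m j * (eT m i * (eT m j * pd m i F)) := by
    rw [dirac_eq]
    rw [Finset.sum_congr rfl fun i (_ : i ∈ Finset.univ) => by rw [step1 i, mul_add]]
    rw [Finset.sum_add_distrib]
    congr 1
    · exact Finset.sum_congr rfl fun i _ => by rw [mul_assoc]
    · refine Finset.sum_congr rfl fun i _ => ?_
      rw [Finset.mul_sum]
      refine Finset.sum_congr rfl fun j _ => ?_
      rw [← mul_assoc, ← xT_comm_eT, mul_assoc]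
  have first : ∑ i, (eT m i * eT m i) * F = -((m : ℂ) • F) := by
    have hterm : ∀ i : Fin m, (eT m i * eT m i) * F = -F := fun i => by
      rw [eT_sq]; exact neg_one_mul F
    rw [Finset.sum_congr rfl fun i _ => hterm i, Finset.sum_const, Finset.card_univ,
      Fintype.card_fin, ← Nat.cast_smul_eq_nsmul ℂ]
    module
  have xdF : xE m * dirac m F = ∑ i, ∑ j, xT m j * (eT m j * (eT m i * pd m i F)) := by
    rw [xE_eq, dirac_eq, Finset.sum_mul]
    rw [Finset.sum_comm]
    refine Finset.sum_congr rfl fun j _ => ?_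
    rw [Finset.mul_sum]
    exact Finset.sum_congr rfl fun i _ => by rw [mul_assoc]
  have second : ∑ i, ∑ j, xT m j * (eT m i * (eT m j * pd m i F))
      = - ((2 : ℂ) • (∑ i, xT m i * pd m i F)) - xE m * dirac m F := by
    rw [eq_sub_iff_add_eq, xdF, ← Finset.sum_add_distrib]
    have h2 : ∀ i j, xT m j * (eT m i * (eT m j * pd m i F))
        + xT m j * (eT m j * (eT m i * pd m i F))
        = if i = j then xT m j * ((-2 : ℂ) • pd m i F) else 0 := by
      intro i j
      rw [← mul_add, ← mul_assoc, ← mul_assoc, ← add_mul, eT_mul_eT]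
      split_ifs <;> simp [smul_mul_assoc, mul_smul_comm]
    rw [Finset.sum_congr rfl fun i (_ : i ∈ Finset.univ) => Finset.sum_add_distrib.symm]
    rw [Finset.sum_congr rfl fun i _ => (Finset.sum_congr rfl fun j _ => h2 i j)]
    rw [Finset.sum_congr rfl fun i (_ : i ∈ Finset.univ) =>
      Finset.sum_ite_eq Finset.univ i (fun j => xT m j * ((-2 : ℂ) • pd m i F))]
    simp only [Finset.mem_univ, if_true]
    rw [Finset.sum_congr rfl fun i (_ : i ∈ Finset.univ) =>
      mul_smul_comm (-2 : ℂ) (xT m i) (pd m i F), ← Finset.smul_sum]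
    module
  rw [expand, first, second]
  module

lemma euler_dirac (m : ℕ) (F : CPoly m) :
    ∑ j, xT m j * pd m j (dirac m F)
      = dirac m (∑ j, xT m j * pd m j F) - dirac m F := by
  have lhs : ∑ j, xT m j * pd m j (dirac m F)
      = ∑ i, ∑ j, xT m j * (eT m i * pd m i (pd m j F)) := by
    rw [Finset.sum_comm]
    refine Finset.sum_congr rfl fun j _ => ?_
    rw [dirac_eq, map_sum, Finset.mul_sum]
    refine Finset.sum_congr rfl fun i _ => ?_
    rw [pd_e_mul, pd_comm]
  have rhs : dirac m (∑ j, xT m j * pd m j F)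
      = dirac m F + ∑ i, ∑ j, xT m j * (eT m i * pd m i (pd m j F)) := by
    rw [dirac_eq]
    have h1 : ∀ i, eT m i * pd m i (∑ j, xT m j * pd m j F)
        = eT m i * pd m i F + ∑ j, xT m j * (eT m i * pd m i (pd m j F)) := by
      intro i
      rw [map_sum, Finset.mul_sum]
      have h2 : ∀ j, eT m i * pd m i (xT m j * pd m j F)
          = (if i = j then eT m i * pd m j F else 0)
            + xT m j * (eT m i * pd m i (pd m j F)) := by
        intro j
        rw [pd_x_mul, mul_add]
        congr 1
        · split_ifs <;> simp
        · rw [← mul_assoc, ← xT_comm_eT, mul_assoc]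
      rw [Finset.sum_congr rfl fun j _ => h2 j, Finset.sum_add_distrib,
        Finset.sum_ite_eq Finset.univ i]
      simp only [Finset.mem_univ, if_true]
    rw [Finset.sum_congr rfl fun i _ => h1 i, Finset.sum_add_distrib, dirac_eq]
  rw [lhs, rhs]
  abel

lemma eulerT (m n : ℕ) {H : CPoly m} (hH : H ∈ HomT m n) :
    ∑ i, xT m i * pd m i H = (n : ℂ) • H := by
  obtain ⟨G, rfl⟩ := hH
  induction G using TensorProduct.induction_on with
  | zero => simp
  | tmul p c =>
      rw [LinearMap.rTensor_tmul]
      simp only [Submodule.subtype_apply]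
      have hp := (mem_homogeneousSubmodule _ _).mp p.2
      have : ∀ i, xT m i * pd m i ((p : MvPolynomial (Fin m) ℂ) ⊗ₜ[ℂ] c)
          = (X i * pderiv i (p : MvPolynomial (Fin m) ℂ)) ⊗ₜ[ℂ] c := by
        intro i
        rw [pd_tmul, xT, Algebra.TensorProduct.tmul_mul_tmul, one_mul]
      rw [Finset.sum_congr rfl fun i _ => this i, ← TensorProduct.sum_tmul,
        euler_poly hp, TensorProduct.smul_tmul']
  | add F G hF hG =>
      rw [map_add]
      simp only [map_add, mul_add, Finset.sum_add_distrib, hF, hG, smul_add]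

lemma xE_sq (m : ℕ) : xE m * xE m = -(r2 m ⊗ₜ[ℂ] (1 : Cl m)) := by
  rw [xE, Finset.sum_mul_sum]
  have comm2 : ∑ i, ∑ j, ((X i : MvPolynomial (Fin m) ℂ) ⊗ₜ[ℂ] gen m i)
        * ((X j : MvPolynomial (Fin m) ℂ) ⊗ₜ[ℂ] gen m j)
      = ∑ i, ∑ j, ((X j : MvPolynomial (Fin m) ℂ) ⊗ₜ[ℂ] gen m j)
        * ((X i : MvPolynomial (Fin m) ℂ) ⊗ₜ[ℂ] gen m i) := Finset.sum_comm
  have key : (∑ i, ∑ j, ((X i : MvPolynomial (Fin m) ℂ) ⊗ₜ[ℂ] gen m i)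
        * ((X j : MvPolynomial (Fin m) ℂ) ⊗ₜ[ℂ] gen m j))
      + (∑ i, ∑ j, ((X i : MvPolynomial (Fin m) ℂ) ⊗ₜ[ℂ] gen m i)
        * ((X j : MvPolynomial (Fin m) ℂ) ⊗ₜ[ℂ] gen m j))
      = (-2 : ℂ) • (r2 m ⊗ₜ[ℂ] (1 : Cl m)) := by
    nth_rewrite 2 [comm2]
    rw [← Finset.sum_add_distrib]
    have h1 : ∀ i j : Fin m, ((X i : MvPolynomial (Fin m) ℂ) ⊗ₜ[ℂ] gen m i)
          * ((X j : MvPolynomial (Fin m) ℂ) ⊗ₜ[ℂ] gen m j)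
        + ((X j : MvPolynomial (Fin m) ℂ) ⊗ₜ[ℂ] gen m j)
          * ((X i : MvPolynomial (Fin m) ℂ) ⊗ₜ[ℂ] gen m i)
        = if i = j then (-2 : ℂ) • ((X i * X i) ⊗ₜ[ℂ] (1 : Cl m)) else 0 := by
      intro i j
      rw [Algebra.TensorProduct.tmul_mul_tmul, Algebra.TensorProduct.tmul_mul_tmul,
        mul_comm (X j) (X i), ← TensorProduct.tmul_add, gen_rel]
      split_ifs with h
      · subst h
        rw [TensorProduct.tmul_smul]
      · simp
    rw [Finset.sum_congr rfl fun i (_ : i ∈ Finset.univ) => Finset.sum_add_distrib.symm]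
    rw [Finset.sum_congr rfl fun i _ => (Finset.sum_congr rfl fun j _ => h1 i j)]
    rw [Finset.sum_congr rfl fun i (_ : i ∈ Finset.univ) =>
      Finset.sum_ite_eq Finset.univ i (fun j => (-2 : ℂ) • ((X i * X i) ⊗ₜ[ℂ] (1 : Cl m)))]
    simp only [Finset.mem_univ, if_true]
    rw [← Finset.smul_sum, r2, TensorProduct.sum_tmul]
    congr 1
    exact Finset.sum_congr rfl fun i _ => by rw [sq]
  exact half_cancel (key.trans (by module))

theorem stmt5 (m n : ℕ) (h : 2 < 2 * n + m) (P H R : CPoly m)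
    (hP : P ∈ HomT m n) (hHhom : H ∈ HomT m n) (hHharm : lapT m H = 0)
    (hdiff : P - H = (r2 m ⊗ₜ[ℂ] (1 : Cl m)) * R) :
    dirac m (H + (2 * (n : ℂ) + (m : ℂ) - 2)⁻¹ • (xE m * dirac m H)) = 0 ∧
    ∃ N, P - (H + (2 * (n : ℂ) + (m : ℂ) - 2)⁻¹ • (xE m * dirac m H)) = xE m * N := by
  have hc : (2 * (n : ℂ) + (m : ℂ) - 2) ≠ 0 := by
    intro h0
    have hne : (2 * n + m : ℕ) ≠ 2 := by omega
    have h2 : 2 * (n : ℂ) + (m : ℂ) = 2 := sub_eq_zero.mp h0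
    have h3 : ((2 * n + m : ℕ) : ℂ) = ((2 : ℕ) : ℂ) := by push_cast; exact h2
    exact hne (Nat.cast_injective h3)
  have hD2 : dirac m (dirac m H) = 0 := by rw [dirac_dirac, hHharm, neg_zero]
  have hE : ∑ i, xT m i * pd m i H = (n : ℂ) • H := eulerT m n hHhom
  have hED : ∑ j, xT m j * pd m j (dirac m H) = ((n : ℂ) - 1) • dirac m H := by
    rw [euler_dirac, hE, dirac_smul]
    module
  have hxD : dirac m (xE m * dirac m H)
      = -((2 * (n : ℂ) + (m : ℂ) - 2) • dirac m H) := by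
    rw [dirac_x_mul, hED, hD2, mul_zero]
    module
  constructor
  · rw [dirac_add, dirac_smul, hxD, smul_neg, smul_smul, inv_mul_cancel₀ hc, one_smul,
      add_neg_cancel]
  · refine ⟨-(xE m * R) - (2 * (n : ℂ) + (m : ℂ) - 2)⁻¹ • dirac m H, ?_⟩
    have hPH : P - (H + (2 * (n : ℂ) + (m : ℂ) - 2)⁻¹ • (xE m * dirac m H))
        = (P - H) - (2 * (n : ℂ) + (m : ℂ) - 2)⁻¹ • (xE m * dirac m H) := by
      module
    have hneg1 : -(r2 m ⊗ₜ[ℂ] (1 : Cl m)) = (-1 : ℂ) • (r2 m ⊗ₜ[ℂ] (1 : Cl m)) := by module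
    have hxx : xE m * (xE m * R) = -(r2 m ⊗ₜ[ℂ] (1 : Cl m) * R) := by
      rw [← mul_assoc, xE_sq, hneg1, smul_mul_assoc]; module
    have hdist : xE m * (-(xE m * R) - (2 * (n : ℂ) + (m : ℂ) - 2)⁻¹ • dirac m H)
        = xE m * -(xE m * R) - xE m * ((2 * (n : ℂ) + (m : ℂ) - 2)⁻¹ • dirac m H) :=
      mul_sub _ _ _
    have hneg2 : -(xE m * R) = (-1 : ℂ) • (xE m * R) := by module
    have h5 : xE m * -(xE m * R) = -(xE m * (xE m * R)) := by
      rw [hneg2, mul_smul_comm]; module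
    have h6 : xE m * ((2 * (n : ℂ) + (m : ℂ) - 2)⁻¹ • dirac m H)
        = (2 * (n : ℂ) + (m : ℂ) - 2)⁻¹ • (xE m * dirac m H) := mul_smul_comm _ _ _
    rw [hPH, hdiff, hdist, h5, hxx, neg_neg, h6]

end
end

section
/- Let m = p + q with q ≥ 1. If F is a complex polynomial in m variables that is harmonic in the v-variables (Δ_v F = 0) and F = r²·Q for some polynomial Q, then F = 0. -/
open MvPolynomial Finset

noncomputable section

/-- The Laplacian in the `u`-variables (the first `p` variables). -/
def lapU (p q : ℕ) (F : MvPolynomial (Fin (p + q)) ℂ) : MvPolynomial (Fin (p + q)) ℂ :=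
  ∑ i ∈ univ.filter (fun i : Fin (p + q) => (i : ℕ) < p), pderiv i (pderiv i F)

/-- The Laplacian in the `v`-variables (the last `q` variables). -/
def lapV (p q : ℕ) (F : MvPolynomial (Fin (p + q)) ℂ) : MvPolynomial (Fin (p + q)) ℂ :=
  ∑ i ∈ univ.filter (fun i : Fin (p + q) => p ≤ (i : ℕ)), pderiv i (pderiv i F)

/-- `|u|² = ∑_{i<p} X_i²`. -/
def u2 (p q : ℕ) : MvPolynomial (Fin (p + q)) ℂ :=
  ∑ i ∈ univ.filter (fun i : Fin (p + q) => (i : ℕ) < p), X i ^ 2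

/-- `|v|² = ∑_{i≥p} X_i²`. -/
def v2 (p q : ℕ) : MvPolynomial (Fin (p + q)) ℂ :=
  ∑ i ∈ univ.filter (fun i : Fin (p + q) => p ≤ (i : ℕ)), X i ^ 2

/-!
Grade polynomials by their degree in the `v`-variables. As `r² = |u|² + |v|²` and `|u|²` has
`v`-degree `0`, the top `v`-component of `F = r² Q` is `|v|² Q_top`, with `Q_top ≠ 0` the top
component of `Q`; as `Δ_v` lowers the `v`-degree by exactly `2`, also `Δ_v (|v|² Q_top) = 0`.
Multiplication by `X_i` is adjoint to `∂_i` for the Fischer inner product, so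
`⟪|v|² Q_top, |v|² Q_top⟫ = ⟪Q_top, Δ_v (|v|² Q_top)⟫ = 0`, forcing `|v|² Q_top = 0`, which is
absurd since `|v|² ≠ 0` when `q ≥ 1`.
-/

section WeightedComponents

variable {σ R M : Type*} [CommSemiring R] [AddCancelCommMonoid M] {w : σ → M}

theorem weightedHomogeneousComponent_mul_of_isWeightedHomogeneous {A : MvPolynomial σ R} {a : M}
    (hA : IsWeightedHomogeneous w A a) (n : M) (P : MvPolynomial σ R) :
    weightedHomogeneousComponent w (n + a) (A * P) = A * weightedHomogeneousComponent w n P := by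
  classical
  induction P using MvPolynomial.induction_on' with
  | add P P' hP hP' => rw [mul_add, map_add, map_add, hP, hP', mul_add]
  | monomial s c =>
    have hs := isWeightedHomogeneous_monomial w s c rfl
    rw [weightedHomogeneousComponent_of_mem (hA.mul hs), weightedHomogeneousComponent_of_mem hs,
      add_comm a, add_left_inj]
    split_ifs <;> simp

theorem pderiv_weightedHomogeneousComponent (i : σ) (n : M) (P : MvPolynomial σ R) :
    pderiv i (weightedHomogeneousComponent w (n + w i) P) =
      weightedHomogeneousComponent w n (pderiv i P) := by
  classical
  ext d
  have hweight : Finsupp.weight w (d + Finsupp.single i 1) = Finsupp.weight w d + w i := by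
    rw [map_add, Finsupp.weight_single, one_smul]
  simp only [coeff_pderiv, coeff_weightedHomogeneousComponent, hweight, add_left_inj]
  split_ifs <;> simp

theorem weightedHomogeneousComponent_weightedTotalDegree_ne_zero
    [LinearOrder M] [OrderBot M] {P : MvPolynomial σ R} (hP : P ≠ 0) :
    weightedHomogeneousComponent w (weightedTotalDegree w P) P ≠ 0 := by
  classical
  obtain ⟨d, hd, hsup⟩ := Finset.exists_mem_eq_sup P.support (support_nonempty.mpr hP)
    (Finsupp.weight w)
  rw [← support_nonempty, support_weightedHomogeneousComponent]
  exact ⟨d, mem_filter.mpr ⟨hd, hsup.symm⟩⟩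

end WeightedComponents

theorem prod_factorial_add_single_one {σ : Type*} [Fintype σ] [DecidableEq σ]
    (β : σ →₀ ℕ) (i : σ) :
    ∏ j, ((β + Finsupp.single i 1 : σ →₀ ℕ) j).factorial = (β i + 1) * ∏ j, (β j).factorial := by
  rw [← mul_prod_erase univ _ (mem_univ i), ← mul_prod_erase univ _ (mem_univ i),
    Finsupp.add_apply, Finsupp.single_eq_same, Nat.factorial_succ, mul_assoc]
  congr 2
  refine prod_congr rfl fun j hj => ?_
  rw [Finsupp.add_apply, Finsupp.single_eq_of_ne (ne_of_mem_erase hj), add_zero]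

section Fischer

variable {m : ℕ}

theorem fischer_eq_sum_of_support_subset {P H : MvPolynomial (Fin m) ℂ}
    {s : Finset (Fin m →₀ ℕ)} (hs : P.support ⊆ s) :
    fischer m P H = ∑ α ∈ s, (∏ i, ((α i).factorial : ℂ)) * starRingEnd ℂ (coeff α P) * coeff α H :=
  sum_subset hs fun α _ hα => by rw [notMem_support_iff.mp hα, map_zero, mul_zero, zero_mul]

theorem fischer_add_left (P P' H : MvPolynomial (Fin m) ℂ) :
    fischer m (P + P') H = fischer m P H + fischer m P' H := by
  classical
  rw [fischer_eq_sum_of_support_subset support_add,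
    fischer_eq_sum_of_support_subset (subset_union_left (s₂ := P'.support)),
    fischer_eq_sum_of_support_subset (subset_union_right (s₁ := P.support)), ← sum_add_distrib]
  refine sum_congr rfl fun α _ => ?_
  rw [coeff_add, map_add]
  ring

theorem fischer_sum_left {ι : Type*} (s : Finset ι) (P : ι → MvPolynomial (Fin m) ℂ)
    (H : MvPolynomial (Fin m) ℂ) :
    fischer m (∑ i ∈ s, P i) H = ∑ i ∈ s, fischer m (P i) H := by
  induction s using Finset.cons_induction with
  | empty => simp [fischer]
  | cons a s ha ih => rw [sum_cons, sum_cons, fischer_add_left, ih]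

theorem fischer_sum_right {ι : Type*} (s : Finset ι) (P : MvPolynomial (Fin m) ℂ)
    (H : ι → MvPolynomial (Fin m) ℂ) :
    fischer m P (∑ i ∈ s, H i) = ∑ i ∈ s, fischer m P (H i) := by
  simp only [fischer, coeff_sum, mul_sum]
  exact sum_comm

theorem fischer_zero_right (P : MvPolynomial (Fin m) ℂ) : fischer m P 0 = 0 := by
  simp [fischer]

theorem fischer_X_mul (i : Fin m) (P H : MvPolynomial (Fin m) ℂ) :
    fischer m (X i * P) H = fischer m P (pderiv i H) := by
  classical
  rw [fischer, support_X_mul, sum_map, fischer]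
  refine sum_congr rfl fun β _ => ?_
  simp only [addLeftEmbedding_apply, coeff_X_mul, coeff_pderiv]
  rw [add_comm (Finsupp.single i 1) β]
  have hfac : ∏ j, (((β + Finsupp.single i 1 : Fin m →₀ ℕ) j).factorial : ℂ) =
      (β i + 1) * ∏ j, ((β j).factorial : ℂ) := by
    exact_mod_cast prod_factorial_add_single_one β i
  rw [hfac]
  ring

theorem fischer_self_eq_ofReal (H : MvPolynomial (Fin m) ℂ) :
    fischer m H H =
      ((∑ α ∈ H.support, (∏ i, ((α i).factorial : ℝ)) * Complex.normSq (coeff α H) : ℝ) : ℂ) := by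
  rw [fischer, Complex.ofReal_sum]
  refine sum_congr rfl fun α _ => ?_
  rw [mul_assoc, ← Complex.normSq_eq_conj_mul_self]
  push_cast
  rfl

theorem fischer_self_ne_zero {H : MvPolynomial (Fin m) ℂ} (hH : H ≠ 0) : fischer m H H ≠ 0 := by
  rw [fischer_self_eq_ofReal, Complex.ofReal_ne_zero]
  refine (sum_pos (fun α hα => mul_pos ?_ ?_) (support_nonempty.mpr hH)).ne'
  · exact prod_pos fun i _ => by positivity
  · exact Complex.normSq_pos.mpr (mem_support_iff.mp hα)

end Fischer

section VDegree

variable {p q : ℕ}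

def vWeight (p q : ℕ) : Fin (p + q) → ℕ := fun i => if p ≤ (i : ℕ) then 1 else 0

theorem isWeightedHomogeneous_X_sq_of_lt {i : Fin (p + q)} (hi : (i : ℕ) < p) :
    IsWeightedHomogeneous (vWeight p q) (X i ^ 2 : MvPolynomial (Fin (p + q)) ℂ) 0 := by
  simpa [vWeight, not_le.mpr hi] using (isWeightedHomogeneous_X ℂ (vWeight p q) i).pow 2

theorem isWeightedHomogeneous_X_sq_of_le {i : Fin (p + q)} (hi : p ≤ (i : ℕ)) :
    IsWeightedHomogeneous (vWeight p q) (X i ^ 2 : MvPolynomial (Fin (p + q)) ℂ) 2 := by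
  simpa [vWeight, hi] using (isWeightedHomogeneous_X ℂ (vWeight p q) i).pow 2

theorem isWeightedHomogeneous_u2 : IsWeightedHomogeneous (vWeight p q) (u2 p q) 0 :=
  IsWeightedHomogeneous.sum _ _ _ fun _ hi => isWeightedHomogeneous_X_sq_of_lt (mem_filter.mp hi).2

theorem isWeightedHomogeneous_v2 : IsWeightedHomogeneous (vWeight p q) (v2 p q) 2 :=
  IsWeightedHomogeneous.sum _ _ _ fun _ hi => isWeightedHomogeneous_X_sq_of_le (mem_filter.mp hi).2

theorem v2_ne_zero (hq : 0 < q) : v2 p q ≠ 0 := by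
  intro h
  have := congrArg (eval (Pi.single (⟨p, by omega⟩ : Fin (p + q)) 1)) h
  simp [v2, Pi.single_apply] at this

theorem r2_eq_u2_add_v2 : r2 (p + q) = u2 p q + v2 p q := by
  rw [r2, u2, v2, ← sum_filter_add_sum_filter_not univ (fun i : Fin (p + q) => (i : ℕ) < p)]
  simp only [not_lt]

theorem lapV_weightedHomogeneousComponent (n : ℕ) (F : MvPolynomial (Fin (p + q)) ℂ) :
    lapV p q (weightedHomogeneousComponent (vWeight p q) (n + 2) F) =
      weightedHomogeneousComponent (vWeight p q) n (lapV p q F) := by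
  rw [lapV, lapV, map_sum]
  refine sum_congr rfl fun i hi => ?_
  have hw : vWeight p q i = 1 := if_pos (mem_filter.mp hi).2
  rw [← pderiv_weightedHomogeneousComponent, ← pderiv_weightedHomogeneousComponent, hw]

theorem fischer_v2_mul (P H : MvPolynomial (Fin (p + q)) ℂ) :
    fischer (p + q) (v2 p q * P) H = fischer (p + q) P (lapV p q H) := by
  rw [v2, sum_mul, fischer_sum_left, lapV, fischer_sum_right]
  refine sum_congr rfl fun i _ => ?_
  rw [sq, mul_assoc, fischer_X_mul, fischer_X_mul]

theorem weightedHomogeneousComponent_r2_mul_weightedTotalDegree (Q : MvPolynomial (Fin (p + q)) ℂ) :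
    weightedHomogeneousComponent (vWeight p q) (weightedTotalDegree (vWeight p q) Q + 2)
        (r2 (p + q) * Q) =
      v2 p q *
        weightedHomogeneousComponent (vWeight p q) (weightedTotalDegree (vWeight p q) Q) Q := by
  have hbeyond : weightedHomogeneousComponent (vWeight p q)
      (weightedTotalDegree (vWeight p q) Q + 2) Q = 0 :=
    weightedHomogeneousComponent_eq_zero _ Q (by omega)
  rw [r2_eq_u2_add_v2, add_mul, map_add,
    weightedHomogeneousComponent_mul_of_isWeightedHomogeneous isWeightedHomogeneous_v2,
    ← add_zero (weightedTotalDegree (vWeight p q) Q + 2),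
    weightedHomogeneousComponent_mul_of_isWeightedHomogeneous isWeightedHomogeneous_u2,
    hbeyond, mul_zero, zero_add]

end VDegree

theorem stmt7 (p q : ℕ) (hq : 1 ≤ q) (F Q : MvPolynomial (Fin (p + q)) ℂ)
    (hharm : lapV p q F = 0) (hdiv : F = r2 (p + q) * Q) : F = 0 := by
  suffices hQ : Q = 0 by rw [hdiv, hQ, mul_zero]
  by_contra hQ
  set e := weightedTotalDegree (vWeight p q) Q
  set Qtop := weightedHomogeneousComponent (vWeight p q) e Q
  have htop : weightedHomogeneousComponent (vWeight p q) (e + 2) F = v2 p q * Qtop := by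
    rw [hdiv, weightedHomogeneousComponent_r2_mul_weightedTotalDegree]
  have hharm_top : lapV p q (v2 p q * Qtop) = 0 := by
    rw [← htop, lapV_weightedHomogeneousComponent, hharm, map_zero]
  have hQtop : Qtop ≠ 0 := weightedHomogeneousComponent_weightedTotalDegree_ne_zero hQ
  refine fischer_self_ne_zero (mul_ne_zero (v2_ne_zero hq) hQtop) ?_
  rw [fischer_v2_mul, hharm_top, fischer_zero_right]

end
end

section
/- (Harmonic branching isomorphism.) Let m = p + q with q ≥ 1 and let n ∈ ℕ. For every harmonic polynomial G in m variables, homogeneous of degree n, there exists a unique polynomial F, homogeneous of degree n, such that Δ_v F = 0 and G - F = r²·Q for some polynomial Q. -/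
open MvPolynomial Finset

noncomputable section

/-!
Let `s` be the set of `v`-variables. For the Fischer inner product, multiplication by `X i` is
adjoint to `∂ i`, so multiplication by `|v|² = ∑_{i ∈ s} X_i²` is adjoint to `Δ_v`; since the
inner product is definite, a `Δ_v`-harmonic multiple of `|v|²` vanishes. Writing
`r² = |u|² + |v|²` and looking at the component of lowest degree in the `u`-variables, on which
`|u|²` contributes nothing, the same holds for a `Δ_v`-harmonic multiple of `r²`: this is
uniqueness. It also makes `B ↦ Δ_v (r² B)` injective, hence bijective, on the
finite-dimensional space of homogeneous polynomials of degree `n - 2`; choosing `B` with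
`Δ_v (r² B) = Δ_v G` gives `F = G - r² B`.
-/

namespace HarmonicBranching

section Weighted

variable {σ R M : Type*} [CommRing R]

lemma weightedHomogeneousComponent_mul_of_isWeightedHomogeneous [AddCancelCommMonoid M]
    {w : σ → M} {A : MvPolynomial σ R} {a : M} (hA : A.IsWeightedHomogeneous w a) (j : M)
    (Q : MvPolynomial σ R) :
    weightedHomogeneousComponent w (a + j) (A * Q) =
      A * weightedHomogeneousComponent w j Q := by
  classical
  set Qj := weightedHomogeneousComponent w j Q
  have hrest : weightedHomogeneousComponent w (a + j) (A * (Q - Qj)) = 0 := by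
    refine weightedHomogeneousComponent_eq_zero' _ _ fun d hd => ?_
    obtain ⟨b, hb, c, hc, rfl⟩ := Finset.mem_add.mp (support_mul _ _ hd)
    have hcj : Finsupp.weight w c ≠ j := fun h => by
      simp [Qj, coeff_weightedHomogeneousComponent, h] at hc
    rwa [map_add, hA (mem_support_iff.mp hb), Ne, add_right_inj]
  have hQj : (A * Qj).IsWeightedHomogeneous w (a + j) :=
    hA.mul (weightedHomogeneousComponent_isWeightedHomogeneous j Q)
  rw [← add_sub_cancel Qj Q, mul_add, map_add, hrest, add_zero,
    weightedHomogeneousComponent_eq_self hQj]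

lemma weightedHomogeneousComponent_mul_eq_zero_of_pos {w : σ → ℕ} {A : MvPolynomial σ R}
    {a : ℕ} (hA : A.IsWeightedHomogeneous w a) (ha : 0 < a) {j : ℕ} {Q : MvPolynomial σ R}
    (hQ : ∀ d ∈ Q.support, j ≤ Finsupp.weight w d) :
    weightedHomogeneousComponent w j (A * Q) = 0 := by
  classical
  refine weightedHomogeneousComponent_eq_zero' _ _ fun d hd => ?_
  obtain ⟨b, hb, c, hc, rfl⟩ := Finset.mem_add.mp (support_mul _ _ hd)
  have := hQ c hc
  rw [map_add, hA (mem_support_iff.mp hb)]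
  omega

lemma pderiv_weightedHomogeneousComponent [AddCommMonoid M] {w : σ → M} {i : σ}
    (hi : w i = 0) (j : M) (P : MvPolynomial σ R) :
    pderiv i (weightedHomogeneousComponent w j P) =
      weightedHomogeneousComponent w j (pderiv i P) := by
  classical
  ext d
  rw [coeff_pderiv, coeff_weightedHomogeneousComponent, coeff_weightedHomogeneousComponent,
    coeff_pderiv, map_add, Finsupp.weight_single, hi, smul_zero, add_zero, ite_mul, zero_mul]

end Weighted

section PartialLaplacian

variable {σ R : Type*} [CommRing R]

def sumSq (s : Finset σ) : MvPolynomial σ R := ∑ i ∈ s, X i ^ 2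

def partialLap (s : Finset σ) : MvPolynomial σ R →ₗ[R] MvPolynomial σ R :=
  ∑ i ∈ s, (pderiv i).toLinearMap ∘ₗ (pderiv i).toLinearMap

lemma partialLap_apply (s : Finset σ) (P : MvPolynomial σ R) :
    partialLap s P = ∑ i ∈ s, pderiv i (pderiv i P) := by
  simp [partialLap]

lemma sumSq_univ [Fintype σ] [DecidableEq σ] (s : Finset σ) :
    (sumSq univ : MvPolynomial σ R) = sumSq sᶜ + sumSq s :=
  (sum_compl_add_sum s _).symm

lemma sumSq_ne_zero [CharZero R] {s : Finset σ} (hs : s.Nonempty) :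
    (sumSq s : MvPolynomial σ R) ≠ 0 := fun h => by
  have := congrArg (eval fun _ => (1 : R)) h
  simp [sumSq, hs.ne_empty] at this

def complIndicator [DecidableEq σ] (s : Finset σ) (i : σ) : ℕ := if i ∈ s then 0 else 1

lemma isWeightedHomogeneous_sumSq [DecidableEq σ] (s : Finset σ) :
    (sumSq s : MvPolynomial σ R).IsWeightedHomogeneous (complIndicator s) 0 :=
  IsWeightedHomogeneous.sum _ _ _ fun i hi => by
    simpa [complIndicator, hi] using (isWeightedHomogeneous_X R (complIndicator s) i).pow 2

lemma isWeightedHomogeneous_sumSq_compl [Fintype σ] [DecidableEq σ] (s : Finset σ) :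
    (sumSq sᶜ : MvPolynomial σ R).IsWeightedHomogeneous (complIndicator s) 2 :=
  IsWeightedHomogeneous.sum _ _ _ fun i hi => by
    simpa [complIndicator, mem_compl.mp hi] using
      (isWeightedHomogeneous_X R (complIndicator s) i).pow 2

lemma partialLap_weightedHomogeneousComponent [DecidableEq σ] (s : Finset σ) (j : ℕ)
    (P : MvPolynomial σ R) :
    partialLap s (weightedHomogeneousComponent (complIndicator s) j P) =
      weightedHomogeneousComponent (complIndicator s) j (partialLap s P) := by
  simp only [partialLap_apply, map_sum]
  refine sum_congr rfl fun i hi => ?_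
  have hi0 : complIndicator s i = 0 := if_pos hi
  rw [pderiv_weightedHomogeneousComponent hi0, pderiv_weightedHomogeneousComponent hi0]

lemma isHomogeneous_sumSq (s : Finset σ) : (sumSq s : MvPolynomial σ R).IsHomogeneous 2 :=
  IsHomogeneous.sum _ _ _ fun i _ => isHomogeneous_X_pow i 2

lemma isHomogeneous_partialLap {P : MvPolynomial σ R} {n : ℕ} (h : P.IsHomogeneous n)
    (s : Finset σ) : (partialLap s P).IsHomogeneous (n - 2) := by
  rw [partialLap_apply]
  exact IsHomogeneous.sum _ _ _ fun i _ => by simpa [Nat.sub_sub] using h.pderiv.pderiv (i := i)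

lemma partialLap_eq_zero_of_isHomogeneous {P : MvPolynomial σ R} {n : ℕ}
    (h : P.IsHomogeneous n) (hn : n < 2) (s : Finset σ) : partialLap s P = 0 := by
  rw [partialLap_apply]
  refine sum_eq_zero fun i _ => ?_
  have h0 : (pderiv i P).IsHomogeneous 0 := by simpa [show n - 1 = 0 by omega] using h.pderiv
  rw [← totalDegree_zero_iff_isHomogeneous, totalDegree_eq_zero_iff_eq_C] at h0
  rw [h0, pderiv_C]

end PartialLaplacian

section Fischer

variable {m : ℕ}

lemma fischer_eq_sum_support_right (P Q : MvPolynomial (Fin m) ℂ) :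
    fischer m P Q = ∑ α ∈ Q.support,
      (∏ i, ((α i).factorial : ℂ)) * (starRingEnd ℂ) (coeff α P) * coeff α Q := by
  classical
  calc fischer m P Q = ∑ α ∈ P.support ∪ Q.support,
        (∏ i, ((α i).factorial : ℂ)) * (starRingEnd ℂ) (coeff α P) * coeff α Q :=
      sum_subset subset_union_left fun α _ h => by simp [notMem_support_iff.mp h]
    _ = _ := (sum_subset subset_union_right fun α _ h => by
      simp [notMem_support_iff.mp h]).symm

lemma fischer_sum_left {ι : Type*} (s : Finset ι) (P : ι → MvPolynomial (Fin m) ℂ)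
    (Q : MvPolynomial (Fin m) ℂ) :
    fischer m (∑ k ∈ s, P k) Q = ∑ k ∈ s, fischer m (P k) Q := by
  simp_rw [fischer_eq_sum_support_right, coeff_sum, map_sum, mul_sum, sum_mul]
  exact sum_comm

lemma fischer_sum_right {ι : Type*} (s : Finset ι) (P : MvPolynomial (Fin m) ℂ)
    (Q : ι → MvPolynomial (Fin m) ℂ) :
    fischer m P (∑ k ∈ s, Q k) = ∑ k ∈ s, fischer m P (Q k) := by
  simp_rw [fischer, coeff_sum, mul_sum]
  exact sum_comm

lemma prod_factorial_add_single (α : Fin m →₀ ℕ) (i : Fin m) :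
    ∏ j, ((α + Finsupp.single i 1 : Fin m →₀ ℕ) j).factorial =
      (α i + 1) * ∏ j, (α j).factorial := by
  rw [Fintype.prod_eq_mul_prod_compl i, Fintype.prod_eq_mul_prod_compl i (α · |>.factorial),
    prod_congr rfl fun j hj => by
      rw [Finsupp.add_apply, Finsupp.single_eq_of_ne (by simpa using hj), add_zero]]
  simp [Nat.factorial_succ, mul_assoc]

lemma fischer_X_mul (i : Fin m) (P Q : MvPolynomial (Fin m) ℂ) :
    fischer m (X i * P) Q = fischer m P (pderiv i Q) := by
  rw [fischer, fischer, support_X_mul, sum_map]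
  refine sum_congr rfl fun α _ => ?_
  rw [addLeftEmbedding_apply, coeff_X_mul, coeff_pderiv, add_comm, ← Nat.cast_prod,
    prod_factorial_add_single]
  push_cast
  ring

lemma fischer_sumSq_mul (s : Finset (Fin m)) (B F : MvPolynomial (Fin m) ℂ) :
    fischer m (sumSq s * B) F = fischer m B (partialLap s F) := by
  rw [sumSq, sum_mul, fischer_sum_left, partialLap_apply, fischer_sum_right]
  exact sum_congr rfl fun i _ => by rw [sq, mul_assoc, fischer_X_mul, fischer_X_mul]

lemma eq_zero_of_fischer_self_eq_zero {P : MvPolynomial (Fin m) ℂ} (h : fischer m P P = 0) :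
    P = 0 := by
  have hreal : fischer m P P = ((∑ α ∈ P.support,
      (∏ i, ((α i).factorial : ℝ)) * Complex.normSq (coeff α P) : ℝ) : ℂ) := by
    push_cast
    exact sum_congr rfl fun α _ => by rw [mul_assoc, Complex.normSq_eq_conj_mul_self]
  rw [hreal, Complex.ofReal_eq_zero, sum_eq_zero_iff_of_nonneg fun _ _ =>
    mul_nonneg (by positivity) (Complex.normSq_nonneg _)] at h
  by_contra hP
  obtain ⟨α, hα⟩ := ne_zero_iff.mp hP
  have := h α (mem_support_iff.mpr hα)
  simp [prod_eq_zero_iff, Nat.factorial_ne_zero, hα] at this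

end Fischer

variable {m : ℕ}

lemma eq_zero_of_partialLap_eq_zero_of_eq_sumSq_mul {s : Finset (Fin m)}
    {F B : MvPolynomial (Fin m) ℂ} (hF : partialLap s F = 0) (hFB : F = sumSq s * B) :
    F = 0 := by
  apply eq_zero_of_fischer_self_eq_zero
  nth_rw 1 [hFB]
  rw [fischer_sumSq_mul, hF, fischer]
  simp

lemma eq_zero_of_partialLap_eq_zero_of_eq_sumSq_univ_mul {s : Finset (Fin m)}
    (hs : s.Nonempty) {F Q : MvPolynomial (Fin m) ℂ} (hF : partialLap s F = 0)
    (hFQ : F = sumSq univ * Q) : F = 0 := by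
  rcases eq_or_ne Q 0 with rfl | hQ
  · rw [hFQ, mul_zero]
  exfalso
  set w := complIndicator s
  obtain ⟨d₀, hd₀, hmin⟩ :=
    Q.support.exists_min_image (Finsupp.weight w) (support_nonempty.mpr hQ)
  set j := Finsupp.weight w d₀
  have hcomp : weightedHomogeneousComponent w j F =
      sumSq s * weightedHomogeneousComponent w j Q := by
    rw [hFQ, sumSq_univ s, add_mul, map_add, weightedHomogeneousComponent_mul_eq_zero_of_pos
        (isWeightedHomogeneous_sumSq_compl s) two_pos hmin, zero_add,
      ← weightedHomogeneousComponent_mul_of_isWeightedHomogeneous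
        (isWeightedHomogeneous_sumSq s), zero_add]
  have hlap : partialLap s (weightedHomogeneousComponent w j F) = 0 := by
    rw [partialLap_weightedHomogeneousComponent, hF, map_zero]
  have hQj : weightedHomogeneousComponent w j Q = 0 := by
    have := eq_zero_of_partialLap_eq_zero_of_eq_sumSq_mul hlap hcomp
    rwa [hcomp, mul_eq_zero, or_iff_right (sumSq_ne_zero hs)] at this
  have := congrArg (coeff d₀) hQj
  rw [coeff_weightedHomogeneousComponent, if_pos rfl, coeff_zero] at this
  exact mem_support_iff.mp hd₀ this

lemma exists_isHomogeneous_partialLap_sumSq_univ_mul_eq {s : Finset (Fin m)}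
    (hs : s.Nonempty) {k : ℕ} {C : MvPolynomial (Fin m) ℂ} (hC : C.IsHomogeneous k) :
    ∃ B : MvPolynomial (Fin m) ℂ, B.IsHomogeneous k ∧ partialLap s (sumSq univ * B) = C := by
  let V := homogeneousSubmodule (Fin m) ℂ k
  have : Module.Finite ℂ V := Module.Finite.iff_fg.mpr (homogeneousSubmodule_fg _ _ k)
  have hmaps : ∀ B ∈ V, (partialLap s ∘ₗ LinearMap.mulLeft ℂ (sumSq univ)) B ∈ V :=
    fun B hB => (mem_homogeneousSubmodule k _).mpr <| by
      simpa using isHomogeneous_partialLap ((isHomogeneous_sumSq univ).mul hB) s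
  let T := (partialLap s ∘ₗ LinearMap.mulLeft ℂ (sumSq univ)).restrict hmaps
  have hT : Function.Injective T := by
    rw [← LinearMap.ker_eq_bot, LinearMap.ker_eq_bot']
    rintro ⟨B, hB⟩ hTB
    have h0 : sumSq univ * B = 0 :=
      eq_zero_of_partialLap_eq_zero_of_eq_sumSq_univ_mul hs (congrArg Subtype.val hTB) rfl
    ext1
    simpa [sumSq_ne_zero (hs.mono (subset_univ s))] using h0
  obtain ⟨⟨B, hB⟩, hTB⟩ := LinearMap.injective_iff_surjective.mp hT ⟨C, hC⟩
  exact ⟨B, hB, congrArg Subtype.val hTB⟩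

lemma exists_isHomogeneous_partialLap_eq_zero_sub_eq_sumSq_univ_mul {s : Finset (Fin m)}
    (hs : s.Nonempty) {n : ℕ} {G : MvPolynomial (Fin m) ℂ} (hG : G.IsHomogeneous n) :
    ∃ F : MvPolynomial (Fin m) ℂ, F.IsHomogeneous n ∧ partialLap s F = 0 ∧
      ∃ Q, G - F = sumSq univ * Q := by
  rcases lt_or_ge n 2 with hn | hn
  · exact ⟨G, hG, partialLap_eq_zero_of_isHomogeneous hG hn s, 0, by simp⟩
  obtain ⟨k, rfl⟩ := Nat.exists_eq_add_of_le' hn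
  obtain ⟨B, hB, hTB⟩ :=
    exists_isHomogeneous_partialLap_sumSq_univ_mul_eq hs (isHomogeneous_partialLap hG s)
  refine ⟨G - sumSq univ * B, hG.sub ?_, by rw [map_sub, hTB, sub_self], B, sub_sub_cancel _ _⟩
  simpa [add_comm] using (isHomogeneous_sumSq univ).mul hB

end HarmonicBranching

open HarmonicBranching in
theorem stmt8_general (p q n : ℕ) (hq : 1 ≤ q) (G : MvPolynomial (Fin (p + q)) ℂ)
    (hhom : G.IsHomogeneous n) :
    ∃! F : MvPolynomial (Fin (p + q)) ℂ,
      F.IsHomogeneous n ∧ lapV p q F = 0 ∧ ∃ Q, G - F = r2 (p + q) * Q := by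
  set s : Finset (Fin (p + q)) := univ.filter fun i => p ≤ (i : ℕ)
  have hs : s.Nonempty := ⟨⟨p, by omega⟩, by simp [s]⟩
  have hlapV : lapV p q = partialLap s := funext fun F => (partialLap_apply s F).symm
  have hr2 : r2 (p + q) = sumSq univ := rfl
  rw [hlapV, hr2]
  obtain ⟨F, hF, hFlap, Q, hGF⟩ :=
    exists_isHomogeneous_partialLap_eq_zero_sub_eq_sumSq_univ_mul hs hhom
  refine ⟨F, ⟨hF, hFlap, Q, hGF⟩, ?_⟩
  rintro F' ⟨-, hF'lap, Q', hGF'⟩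
  refine sub_eq_zero.mp (eq_zero_of_partialLap_eq_zero_of_eq_sumSq_univ_mul hs (Q := Q - Q') ?_ ?_)
  · rw [map_sub, hF'lap, hFlap, sub_self]
  · linear_combination hGF - hGF'

theorem stmt8 (p q n : ℕ) (hq : 1 ≤ q) (G : MvPolynomial (Fin (p + q)) ℂ)
    (hharm : lap (p + q) G = 0) (hhom : G.IsHomogeneous n) :
    ∃! F : MvPolynomial (Fin (p + q)) ℂ,
      F.IsHomogeneous n ∧ lapV p q F = 0 ∧ ∃ Q, G - F = r2 (p + q) * Q :=
  stmt8_general p q n hq G hhom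

end
end

section
/- (Laplace–Beltrami eigenvalues of the branched basis elements.) Let m = p + q with p, q ≥ 1, let s, k, i ∈ ℕ with 2s + k + i = n, let P_k be a harmonic polynomial in the u-variables homogeneous of degree k and Q_i a harmonic polynomial in the v-variables homogeneous of degree i, and let H be a harmonic polynomial in m variables with |u|^{2s}·P_k·Q_i - H ∈ r²·Pol. Then |u|²·Δ_u H - E_u(E_u H) - (p-2)·E_u H = -k(k+p-2)·H, |v|²·Δ_v H - E_v(E_v H) - (q-2)·E_v H = -i(i+q-2)·H, and r²·ΔH - E(E H) - (m-2)·E H = -n(n+m-2)·H. -/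
/-!
Write `S_T = |x_T|² Δ_T - E_T (E_T + #T - 2)` for the spherical Laplacian in a set `T` of
variables. It commutes with the full Laplacian `Δ` and with multiplication by `r²`, and on
`F = |u|^{2s} P_k Q_i` it acts by the scalar `-k(k+p-2)` (for `T = u`), `-i(i+q-2)` (for `T = v`),
or `-n(n+m-2)` up to the error `r² ΔF` (for `T` = all variables). So if `H = F - r² Q` is
harmonic, `S_T H - λ H` is harmonic and divisible by `r²`, hence zero: `f ↦ Δ(r² f)` is
injective. For the latter, on forms of degree `d` one has `Δ(r² f) = r² Δf + (4d + 2m) f`, so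
`Δ(r² f) = 0` gives `r² Δf = -c f` with `c > 0`; applying `Δ` once more gives the same kind of
relation for `Δf`, and descending on the degree forces `Δf = 0`, hence `f = 0`.
-/

open MvPolynomial Finset

noncomputable section

/-- The Euler operator in the `u`-variables. -/
def eulerU (p q : ℕ) (F : MvPolynomial (Fin (p + q)) ℂ) : MvPolynomial (Fin (p + q)) ℂ :=
  ∑ i ∈ univ.filter (fun i : Fin (p + q) => (i : ℕ) < p), X i * pderiv i F

/-- The Euler operator in the `v`-variables. -/
def eulerV (p q : ℕ) (F : MvPolynomial (Fin (p + q)) ℂ) : MvPolynomial (Fin (p + q)) ℂ :=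
  ∑ i ∈ univ.filter (fun i : Fin (p + q) => p ≤ (i : ℕ)), X i * pderiv i F

namespace MvPolynomial

variable {R σ : Type*} [CommRing R] {T : Finset σ} {f : MvPolynomial σ R}

theorem pderiv_pderiv_comm (i j : σ) (f : MvPolynomial σ R) :
    pderiv i (pderiv j f) = pderiv j (pderiv i f) := by
  have h : ⁅pderiv (R := R) i, pderiv (R := R) j⁆ = 0 := by
    refine derivation_ext fun k => ?_
    rw [Derivation.commutator_apply]
    classical simp [pderiv_X, Pi.single_apply, apply_ite]
  have := congr($h f)
  rwa [Derivation.commutator_apply, Derivation.zero_apply, sub_eq_zero] at this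

theorem pderiv_ofNat (i : σ) (n : ℕ) [n.AtLeastTwo] :
    pderiv i (ofNat(n) : MvPolynomial σ R) = 0 := by
  rw [← map_ofNat C n, pderiv_C]

theorem pderiv_eq_zero_of_mem_supported {s : Set σ} {j : σ} (hf : f ∈ supported R s)
    (hj : j ∉ s) : pderiv j f = 0 :=
  pderiv_eq_zero_of_notMem_vars fun h => hj (mem_supported.mp hf h)

def laplacian (T : Finset σ) : MvPolynomial σ R →ₗ[R] MvPolynomial σ R :=
  ∑ i ∈ T, (pderiv i).toLinearMap ∘ₗ (pderiv i).toLinearMap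

def euler (T : Finset σ) : Derivation R (MvPolynomial σ R) (MvPolynomial σ R) :=
  ∑ i ∈ T, (X i : MvPolynomial σ R) • pderiv i

def normSq (T : Finset σ) : MvPolynomial σ R := ∑ i ∈ T, X i ^ 2

def sphericalLaplacian (T : Finset σ) : MvPolynomial σ R →ₗ[R] MvPolynomial σ R :=
  LinearMap.mulLeft R (normSq T) ∘ₗ laplacian T
    - (euler T).toLinearMap ∘ₗ (euler T).toLinearMap - ((#T : R) - 2) • (euler T).toLinearMap

theorem laplacian_apply : laplacian T f = ∑ i ∈ T, pderiv i (pderiv i f) := by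
  simp [laplacian]

theorem euler_apply : euler T f = ∑ i ∈ T, X i * pderiv i f := by
  change Derivation.coeFnAddMonoidHom (∑ i ∈ T, (X i : MvPolynomial σ R) • pderiv i) f = _
  simp [map_sum, Finset.sum_apply]

theorem sphericalLaplacian_apply : sphericalLaplacian T f =
    normSq T * laplacian T f - euler T (euler T f) - ((#T : R) - 2) • euler T f := by
  simp [sphericalLaplacian]

variable (T) in
theorem normSq_mem_supported : normSq T ∈ supported R (T : Set σ) :=
  Subalgebra.sum_mem _ fun _ hi =>
    Subalgebra.pow_mem _ (Algebra.subset_adjoin (Set.mem_image_of_mem X hi)) _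

variable (T) in
theorem isHomogeneous_normSq : (normSq T : MvPolynomial σ R).IsHomogeneous 2 :=
  IsHomogeneous.sum _ _ _ fun i _ => isHomogeneous_X_pow i 2

theorem pderiv_normSq_of_mem {j : σ} (hj : j ∈ T) :
    pderiv j (normSq T : MvPolynomial σ R) = 2 * X j := by
  classical
  rw [normSq, map_sum, Finset.sum_eq_single_of_mem j hj]
  · simp
  · intro i _ hij
    simp [pderiv_X, hij]

theorem euler_normSq : euler T (normSq T : MvPolynomial σ R) = 2 * normSq T := by
  rw [euler_apply, Finset.sum_congr rfl fun i hi => by rw [pderiv_normSq_of_mem hi], normSq,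
    Finset.mul_sum]
  exact Finset.sum_congr rfl fun i _ => by ring

theorem laplacian_normSq_mul : laplacian T (normSq T * f) =
    normSq T * laplacian T f + 4 * euler T f + 2 * (#T : MvPolynomial σ R) * f := by
  have key : ∀ i ∈ T, pderiv i (pderiv i (normSq T * f)) =
      normSq T * pderiv i (pderiv i f) + 4 * (X i * pderiv i f) + 2 * f := fun i hi => by
    simp only [Derivation.leibniz, smul_eq_mul, map_add, pderiv_normSq_of_mem hi, pderiv_X_self,
      pderiv_ofNat]
    ring
  rw [laplacian_apply, Finset.sum_congr rfl key, Finset.sum_add_distrib, Finset.sum_add_distrib,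
    ← Finset.mul_sum, ← Finset.mul_sum, ← laplacian_apply, ← euler_apply, Finset.sum_const,
    nsmul_eq_mul]
  ring

theorem pderiv_euler_of_mem {j : σ} (hj : j ∈ T) :
    pderiv j (euler T f) = euler T (pderiv j f) + pderiv j f := by
  classical
  have key : ∀ i ∈ T, pderiv j (X i * pderiv i f) =
      X i * pderiv i (pderiv j f) + if i = j then pderiv j f else 0 := fun i _ => by
    rw [Derivation.leibniz, pderiv_X, pderiv_pderiv_comm j i]
    split_ifs with h <;> simp [h, add_comm]
  rw [euler_apply, map_sum, Finset.sum_congr rfl key, Finset.sum_add_distrib,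
    Finset.sum_ite_eq' T j, if_pos hj, euler_apply]

theorem pderiv_euler_of_notMem {j : σ} (hj : j ∉ T) :
    pderiv j (euler T f) = euler T (pderiv j f) := by
  classical
  have key : ∀ i ∈ T, pderiv j (X i * pderiv i f) = X i * pderiv i (pderiv j f) :=
    fun i hi => by
      rw [Derivation.leibniz, pderiv_X, pderiv_pderiv_comm j i,
        Pi.single_eq_of_ne (ne_of_mem_of_not_mem hi hj), smul_zero, add_zero, smul_eq_mul]
  rw [euler_apply, map_sum, Finset.sum_congr rfl key, euler_apply]

theorem pderiv_laplacian (j : σ) : pderiv j (laplacian T f) = laplacian T (pderiv j f) := by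
  simp only [laplacian_apply, map_sum, pderiv_pderiv_comm j]

theorem laplacian_euler :
    laplacian T (euler T f) = euler T (laplacian T f) + 2 * laplacian T f := by
  rw [laplacian_apply, Finset.sum_congr rfl fun i hi => by
    rw [pderiv_euler_of_mem hi, map_add, pderiv_euler_of_mem hi]]
  rw [laplacian_apply, map_sum, two_mul, ← Finset.sum_add_distrib, ← Finset.sum_add_distrib]
  exact Finset.sum_congr rfl fun i _ => by abel

theorem laplacian_mul_of_pderiv_eq_zero {g : MvPolynomial σ R} (hg : ∀ i ∈ T, pderiv i g = 0) :
    laplacian T (g * f) = g * laplacian T f := by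
  simp only [laplacian_apply, Finset.mul_sum]
  exact Finset.sum_congr rfl fun i hi => by simp [Derivation.leibniz, hg i hi]

theorem euler_mul_of_pderiv_eq_zero {g : MvPolynomial σ R} (hg : ∀ i ∈ T, pderiv i g = 0) :
    euler T (g * f) = g * euler T f := by
  simp only [euler_apply, Finset.mul_sum]
  exact Finset.sum_congr rfl fun i hi => by simp [Derivation.leibniz, hg i hi]; ring

theorem sphericalLaplacian_mul_of_pderiv_eq_zero {g : MvPolynomial σ R}
    (hg : ∀ i ∈ T, pderiv i g = 0) :
    sphericalLaplacian T (g * f) = g * sphericalLaplacian T f := by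
  simp only [sphericalLaplacian_apply, laplacian_mul_of_pderiv_eq_zero hg,
    euler_mul_of_pderiv_eq_zero hg, smul_eq_C_mul]
  ring

theorem sphericalLaplacian_normSq_mul :
    sphericalLaplacian T (normSq T * f) = normSq T * sphericalLaplacian T f := by
  simp only [sphericalLaplacian_apply, laplacian_normSq_mul, map_add, two_mul,
    Derivation.leibniz, euler_normSq, smul_eq_mul, smul_eq_C_mul, map_sub, map_natCast, map_ofNat]
  ring

theorem sphericalLaplacian_normSq_pow_mul (s : ℕ) :
    sphericalLaplacian T (normSq T ^ s * f) = normSq T ^ s * sphericalLaplacian T f := by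
  induction s with
  | zero => simp
  | succ s ih => rw [pow_succ', mul_assoc, sphericalLaplacian_normSq_mul, ih, mul_assoc]

theorem laplacian_sphericalLaplacian :
    laplacian T (sphericalLaplacian T f) = sphericalLaplacian T (laplacian T f) := by
  simp only [sphericalLaplacian_apply, map_sub, LinearMap.map_smul, laplacian_normSq_mul,
    laplacian_euler, map_add, two_mul]
  simp only [smul_eq_C_mul, map_sub, map_natCast, map_ofNat]
  ring

theorem pderiv_sphericalLaplacian_of_notMem {j : σ} (hj : j ∉ T) :
    pderiv j (sphericalLaplacian T f) = sphericalLaplacian T (pderiv j f) := by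
  have hN : pderiv j (normSq T : MvPolynomial σ R) = 0 :=
    pderiv_eq_zero_of_mem_supported (normSq_mem_supported T) hj
  simp only [sphericalLaplacian_apply, map_sub, Derivation.map_smul, Derivation.leibniz, hN,
    smul_eq_mul, mul_zero, add_zero, pderiv_euler_of_notMem hj, pderiv_laplacian]

theorem sphericalLaplacian_of_euler_eq {k : ℕ} (h : euler T f = k • f) :
    sphericalLaplacian T f =
      (-(k : R) * ((k : R) + (#T : R) - 2)) • f + normSq T * laplacian T f := by
  rw [sphericalLaplacian_apply, h, Derivation.map_smul_of_tower, h]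
  module

theorem IsHomogeneous.laplacian {d : ℕ} (hf : f.IsHomogeneous d) :
    (laplacian T f).IsHomogeneous (d - 2) := by
  rw [laplacian_apply]
  exact IsHomogeneous.sum _ _ _ fun i _ => by simpa [Nat.sub_sub] using hf.pderiv.pderiv (i := i)

theorem laplacian_eq_zero_of_isHomogeneous_of_lt_two {d : ℕ} (hf : f.IsHomogeneous d)
    (hd : d < 2) : laplacian T f = 0 := by
  rw [laplacian_apply]
  refine Finset.sum_eq_zero fun i _ => ?_
  have h0 : (pderiv i f).totalDegree = 0 := by
    have := (hf.pderiv (i := i)).totalDegree_le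
    omega
  rw [totalDegree_eq_zero_iff_eq_C.mp h0, pderiv_C]

section Fintype

variable [Fintype σ]

variable (T f) in
theorem laplacian_univ_eq_add_compl [DecidableEq σ] :
    laplacian univ f = laplacian T f + laplacian Tᶜ f := by
  simp only [laplacian_apply, Finset.sum_add_sum_compl]

variable (T) in
theorem normSq_univ_eq_add_compl [DecidableEq σ] :
    (normSq univ : MvPolynomial σ R) = normSq T + normSq Tᶜ :=
  (Finset.sum_add_sum_compl T _).symm

theorem laplacian_univ_sphericalLaplacian :
    laplacian univ (sphericalLaplacian T f) = sphericalLaplacian T (laplacian univ f) := by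
  classical
  have hcompl :
      laplacian Tᶜ (sphericalLaplacian T f) = sphericalLaplacian T (laplacian Tᶜ f) := by
    simp only [laplacian_apply, map_sum]
    refine Finset.sum_congr rfl fun j hj => ?_
    rw [pderiv_sphericalLaplacian_of_notMem (Finset.mem_compl.mp hj),
      pderiv_sphericalLaplacian_of_notMem (Finset.mem_compl.mp hj)]
  rw [laplacian_univ_eq_add_compl T, laplacian_univ_eq_add_compl T f, map_add,
    laplacian_sphericalLaplacian, hcompl]

theorem sphericalLaplacian_normSq_univ_mul :
    sphericalLaplacian T (normSq univ * f) = normSq univ * sphericalLaplacian T f := by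
  classical
  have hcompl : ∀ i ∈ T, pderiv i (normSq Tᶜ : MvPolynomial σ R) = 0 := fun i hi =>
    pderiv_eq_zero_of_mem_supported (normSq_mem_supported Tᶜ) (by simpa using hi)
  rw [normSq_univ_eq_add_compl T, add_mul, map_add, sphericalLaplacian_normSq_mul,
    sphericalLaplacian_mul_of_pderiv_eq_zero hcompl, add_mul]

theorem laplacian_of_mem_supported (hf : f ∈ supported R (T : Set σ)) :
    laplacian T f = laplacian univ f := by
  simp only [laplacian_apply]
  refine Finset.sum_subset (Finset.subset_univ T) fun j _ hj => ?_
  rw [pderiv_eq_zero_of_mem_supported hf hj, map_zero]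

theorem euler_of_mem_supported (hf : f ∈ supported R (T : Set σ)) :
    euler T f = euler univ f := by
  simp only [euler_apply]
  refine Finset.sum_subset (Finset.subset_univ T) fun j _ hj => ?_
  rw [pderiv_eq_zero_of_mem_supported hf hj, mul_zero]

theorem euler_univ_of_isHomogeneous {d : ℕ} (hf : f.IsHomogeneous d) :
    euler univ f = d • f := by
  rw [euler_apply, hf.sum_X_mul_pderiv]

theorem sphericalLaplacian_of_harmonic_of_isHomogeneous {k : ℕ}
    (hf : f ∈ supported R (T : Set σ)) (hΔ : laplacian univ f = 0) (hk : f.IsHomogeneous k) :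
    sphericalLaplacian T f = (-(k : R) * ((k : R) + (#T : R) - 2)) • f := by
  rw [sphericalLaplacian_of_euler_eq (by rw [euler_of_mem_supported hf,
    euler_univ_of_isHomogeneous hk]), laplacian_of_mem_supported hf, hΔ, mul_zero, add_zero]

theorem laplacian_normSq_mul_of_isHomogeneous {d : ℕ} (hf : f.IsHomogeneous d) :
    laplacian univ (normSq univ * f) = normSq univ * laplacian univ f
      + ((4 * d + 2 * Fintype.card σ : ℕ) : MvPolynomial σ R) * f := by
  rw [laplacian_normSq_mul, euler_univ_of_isHomogeneous hf, card_univ, nsmul_eq_mul]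
  push_cast
  ring

variable [IsDomain R] [CharZero R]

theorem eq_zero_of_normSq_mul_laplacian_eq_neg {d c : ℕ} (hf : f.IsHomogeneous d) (hc : 0 < c)
    (h : normSq univ * laplacian univ f = -((c : MvPolynomial σ R) * f)) : f = 0 := by
  induction d using Nat.strong_induction_on generalizing f c with
  | _ d ih =>
  have hΔ : laplacian univ f = 0 := by
    rcases lt_or_ge d 2 with hd | hd
    · exact laplacian_eq_zero_of_isHomogeneous_of_lt_two hf hd
    refine ih (d - 2) (by omega) hf.laplacian (c := c + (4 * (d - 2) + 2 * Fintype.card σ))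
      (by omega) ?_
    have hc : ∀ i ∈ univ, pderiv i (c : MvPolynomial σ R) = 0 := fun i _ =>
      Derivation.map_natCast _ c
    have := congrArg (laplacian univ) h
    rw [laplacian_normSq_mul_of_isHomogeneous hf.laplacian, map_neg,
      laplacian_mul_of_pderiv_eq_zero hc] at this
    push_cast at this ⊢
    linear_combination this
  have hc0 : (c : MvPolynomial σ R) ≠ 0 := Nat.cast_ne_zero.mpr hc.ne'
  simpa [hΔ, hc0] using h

theorem eq_zero_of_laplacian_normSq_mul_eq_zero [Nonempty σ]
    (h : laplacian univ (normSq univ * f) = 0) : f = 0 := by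
  have hhom (i : ℕ) : laplacian univ (normSq univ * homogeneousComponent i f) ∈
      homogeneousSubmodule σ R i := by
    simpa using ((isHomogeneous_normSq univ).mul (homogeneousComponent_isHomogeneous i f)).laplacian
  rw [← sum_homogeneousComponent f] at h ⊢
  refine Finset.sum_eq_zero fun j hj => ?_
  have hfj := homogeneousComponent_isHomogeneous j f
  have hj0 : laplacian univ (normSq univ * homogeneousComponent j f) = 0 := by
    simpa [Finset.mul_sum, homogeneousComponent_of_mem (hhom _), hj] using
      congrArg (homogeneousComponent j) h
  refine eq_zero_of_normSq_mul_laplacian_eq_neg hfj (c := 4 * j + 2 * Fintype.card σ)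
    (by have := Fintype.card_pos (α := σ); omega) ?_
  rw [laplacian_normSq_mul_of_isHomogeneous hfj] at hj0
  linear_combination hj0

theorem sphericalLaplacian_eq_smul_of_sub_eq_normSq_mul [Nonempty σ] {F H Q W : MvPolynomial σ R}
    {c : R} (hFH : F - H = normSq univ * Q) (hH : laplacian univ H = 0)
    (hF : sphericalLaplacian T F = c • F + normSq univ * W) :
    sphericalLaplacian T H = c • H := by
  have hdiff : sphericalLaplacian T H - c • H =
      normSq univ * (W - sphericalLaplacian T Q + c • Q) := by
    rw [show H = F - normSq univ * Q by rw [← hFH]; ring, map_sub,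
      sphericalLaplacian_normSq_univ_mul, hF]
    simp only [smul_eq_C_mul]
    ring
  have hharm : laplacian univ (normSq univ * (W - sphericalLaplacian T Q + c • Q)) = 0 := by
    rw [← hdiff, map_sub, laplacian_univ_sphericalLaplacian, map_smul, hH, map_zero, smul_zero,
      sub_zero]
  rwa [eq_zero_of_laplacian_normSq_mul_eq_zero hharm, mul_zero, sub_eq_zero] at hdiff

end Fintype

end MvPolynomial

theorem lap_eq_laplacian (m : ℕ) (F : MvPolynomial (Fin m) ℂ) : lap m F = laplacian univ F :=
  laplacian_apply.symm

theorem card_filter_le_val_add (p q : ℕ) : #{j : Fin (p + q) | p ≤ (j : ℕ)} = q := by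
  have := card_filter_add_card_filter_not (s := univ) fun j : Fin (p + q) => (j : ℕ) < p
  simp only [not_lt, Fin.card_filter_val_lt, card_univ, Fintype.card_fin] at this
  omega

theorem sphericalLaplacian_filter_lt_apply (p q : ℕ) (F : MvPolynomial (Fin (p + q)) ℂ) :
    sphericalLaplacian {j : Fin (p + q) | (j : ℕ) < p} F =
      u2 p q * lapU p q F - eulerU p q (eulerU p q F) - ((p : ℂ) - 2) • eulerU p q F := by
  rw [sphericalLaplacian_apply, laplacian_apply, euler_apply, euler_apply, Fin.card_filter_val_lt,
    min_eq_right (Nat.le_add_right p q)]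
  rfl

theorem sphericalLaplacian_filter_le_apply (p q : ℕ) (F : MvPolynomial (Fin (p + q)) ℂ) :
    sphericalLaplacian {j : Fin (p + q) | p ≤ (j : ℕ)} F =
      v2 p q * lapV p q F - eulerV p q (eulerV p q F) - ((q : ℂ) - 2) • eulerV p q F := by
  rw [sphericalLaplacian_apply, laplacian_apply, euler_apply, euler_apply, card_filter_le_val_add]
  rfl

theorem sphericalLaplacian_univ_apply (p q : ℕ) (F : MvPolynomial (Fin (p + q)) ℂ) :
    sphericalLaplacian univ F = r2 (p + q) * lap (p + q) F - eulerOp (p + q) (eulerOp (p + q) F)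
      - (((p : ℂ) + (q : ℂ)) - 2) • eulerOp (p + q) F := by
  rw [sphericalLaplacian_apply, laplacian_apply, euler_apply, euler_apply, card_univ,
    Fintype.card_fin, Nat.cast_add]
  rfl

theorem stmt14_general (p q s k i n : ℕ) (hp : 1 ≤ p) (hn : 2 * s + k + i = n)
    (Pk Qi : MvPolynomial (Fin (p + q)) ℂ)
    (hPk_supp : Pk ∈ MvPolynomial.supported ℂ {j : Fin (p + q) | (j : ℕ) < p})
    (hPk_harm : lap (p + q) Pk = 0) (hPk_hom : Pk.IsHomogeneous k)
    (hQi_supp : Qi ∈ MvPolynomial.supported ℂ {j : Fin (p + q) | p ≤ (j : ℕ)})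
    (hQi_harm : lap (p + q) Qi = 0) (hQi_hom : Qi.IsHomogeneous i)
    (H : MvPolynomial (Fin (p + q)) ℂ) (hH_harm : lap (p + q) H = 0)
    (hH_diff : ∃ R, u2 p q ^ s * Pk * Qi - H = r2 (p + q) * R) :
    u2 p q * lapU p q H - eulerU p q (eulerU p q H) - ((p : ℂ) - 2) • eulerU p q H
        = (-(k : ℂ) * ((k : ℂ) + (p : ℂ) - 2)) • H ∧
    v2 p q * lapV p q H - eulerV p q (eulerV p q H) - ((q : ℂ) - 2) • eulerV p q H
        = (-(i : ℂ) * ((i : ℂ) + (q : ℂ) - 2)) • H ∧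
    r2 (p + q) * lap (p + q) H - eulerOp (p + q) (eulerOp (p + q) H)
        - (((p : ℂ) + (q : ℂ)) - 2) • eulerOp (p + q) H
        = (-(n : ℂ) * ((n : ℂ) + (p : ℂ) + (q : ℂ) - 2)) • H := by
  have : Nonempty (Fin (p + q)) := ⟨⟨0, by omega⟩⟩
  rw [← sphericalLaplacian_filter_lt_apply, ← sphericalLaplacian_filter_le_apply,
    ← sphericalLaplacian_univ_apply]
  rw [lap_eq_laplacian] at hPk_harm hQi_harm hH_harm
  set Tu : Finset (Fin (p + q)) := {j | (j : ℕ) < p}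
  set Tv : Finset (Fin (p + q)) := {j | p ≤ (j : ℕ)}
  obtain ⟨Q, hQ⟩ := hH_diff
  replace hQ : normSq Tu ^ s * Pk * Qi - H = normSq univ * Q := hQ
  replace hPk_supp : Pk ∈ supported ℂ (Tu : Set (Fin (p + q))) := by rwa [coe_filter_univ]
  replace hQi_supp : Qi ∈ supported ℂ (Tv : Set (Fin (p + q))) := by rwa [coe_filter_univ]
  have hPk := sphericalLaplacian_of_harmonic_of_isHomogeneous hPk_supp hPk_harm hPk_hom
  have hQi := sphericalLaplacian_of_harmonic_of_isHomogeneous hQi_supp hQi_harm hQi_hom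
  rw [Fin.card_filter_val_lt, min_eq_right (Nat.le_add_right p q)] at hPk
  rw [card_filter_le_val_add] at hQi
  have hQi_const : ∀ j ∈ Tu, pderiv j Qi = 0 := fun j hj =>
    pderiv_eq_zero_of_mem_supported hQi_supp (by simp [Tu, Tv] at hj ⊢; omega)
  have hPk_const : ∀ j ∈ Tv, pderiv j (normSq Tu ^ s * Pk) = 0 := fun j hj =>
    pderiv_eq_zero_of_mem_supported
      (Subalgebra.mul_mem _ (Subalgebra.pow_mem _ (normSq_mem_supported Tu) s) hPk_supp)
      (by simp [Tu, Tv] at hj ⊢; omega)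
  have hF : (normSq Tu ^ s * Pk * Qi).IsHomogeneous n :=
    hn ▸ (((isHomogeneous_normSq Tu).pow s).mul hPk_hom).mul hQi_hom
  refine ⟨sphericalLaplacian_eq_smul_of_sub_eq_normSq_mul hQ hH_harm (W := 0) ?_,
    sphericalLaplacian_eq_smul_of_sub_eq_normSq_mul hQ hH_harm (W := 0) ?_,
    sphericalLaplacian_eq_smul_of_sub_eq_normSq_mul hQ hH_harm
      (W := laplacian univ (normSq Tu ^ s * Pk * Qi)) ?_⟩
  · rw [mul_comm _ Qi, sphericalLaplacian_mul_of_pderiv_eq_zero hQi_const,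
      sphericalLaplacian_normSq_pow_mul, hPk, mul_zero, add_zero, mul_smul_comm, mul_smul_comm]
  · rw [sphericalLaplacian_mul_of_pderiv_eq_zero hPk_const, hQi, mul_zero, add_zero,
      mul_smul_comm]
  · rw [sphericalLaplacian_of_euler_eq (euler_univ_of_isHomogeneous hF), card_univ,
      Fintype.card_fin, Nat.cast_add, ← add_assoc]

theorem stmt14 (p q s k i n : ℕ) (hp : 1 ≤ p) (hq : 1 ≤ q) (hn : 2 * s + k + i = n)
    (Pk Qi : MvPolynomial (Fin (p + q)) ℂ)
    (hPk_supp : Pk ∈ MvPolynomial.supported ℂ {j : Fin (p + q) | (j : ℕ) < p})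
    (hPk_harm : lap (p + q) Pk = 0) (hPk_hom : Pk.IsHomogeneous k)
    (hQi_supp : Qi ∈ MvPolynomial.supported ℂ {j : Fin (p + q) | p ≤ (j : ℕ)})
    (hQi_harm : lap (p + q) Qi = 0) (hQi_hom : Qi.IsHomogeneous i)
    (H : MvPolynomial (Fin (p + q)) ℂ) (hH_harm : lap (p + q) H = 0)
    (hH_diff : ∃ R, u2 p q ^ s * Pk * Qi - H = r2 (p + q) * R) :
    u2 p q * lapU p q H - eulerU p q (eulerU p q H) - ((p : ℂ) - 2) • eulerU p q H
        = (-(k : ℂ) * ((k : ℂ) + (p : ℂ) - 2)) • H ∧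
    v2 p q * lapV p q H - eulerV p q (eulerV p q H) - ((q : ℂ) - 2) • eulerV p q H
        = (-(i : ℂ) * ((i : ℂ) + (q : ℂ) - 2)) • H ∧
    r2 (p + q) * lap (p + q) H - eulerOp (p + q) (eulerOp (p + q) H)
        - (((p : ℂ) + (q : ℂ)) - 2) • eulerOp (p + q) H
        = (-(n : ℂ) * ((n : ℂ) + (p : ℂ) + (q : ℂ) - 2)) • H :=
  stmt14_general p q s k i n hp hn Pk Qi hPk_supp hPk_harm hPk_hom hQi_supp hQi_harm hQi_hom H
    hH_harm hH_diff

end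
end
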